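/- arXiv:math/9903028 — 3 statements merged into one kernel-verified Lean document; each statement's English description precedes it below -/
import Mathlib

section
/- For every integer N ≥ 1 and every nonzero q ∈ ℂ, the ring F_q(N) is an integral domain (it is nontrivial and has no zero divisors) and is both left and right Noetherian. -/
noncomputable section

variable {R : Type} [Ring R] [Algebra ℂ R]

/-- A `σ`-derivation. -/
structure SkewDer (R : Type) [Ring R] [Algebra ℂ R] (σ : R ≃ₐ[ℂ] R) where
  lin : R →ₗ[ℂ] R
  leibniz : ∀ a b : R, lin (a * b) = σ a * lin b + lin a * b

/-- Skew polynomial ring `R[X; σ, δ]`, coefficients written on the left. -/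
def SkewPoly (R : Type) [Ring R] [Algebra ℂ R] (σ : R ≃ₐ[ℂ] R) (δ : SkewDer R σ) : Type :=
  ℕ →₀ R

namespace SkewPoly

variable {σ : R ≃ₐ[ℂ] R} {δ : SkewDer R σ}

instance : AddCommGroup (SkewPoly R σ δ) := inferInstanceAs (AddCommGroup (ℕ →₀ R))
instance : Module ℂ (SkewPoly R σ δ) := inferInstanceAs (Module ℂ (ℕ →₀ R))

def mono (n : ℕ) (r : R) : SkewPoly R σ δ := Finsupp.single n r

def coeff (f : SkewPoly R σ δ) (n : ℕ) : R := (show ℕ →₀ R from f) n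

@[simp] lemma coeff_mono_same (n : ℕ) (r : R) : coeff (σ := σ) (δ := δ) (mono n r) n = r := by
  simp [coeff, mono]

lemma coeff_mono (n m : ℕ) (r : R) :
    coeff (σ := σ) (δ := δ) (mono n r) m = if n = m then r else 0 := by
  simp [coeff, mono, Finsupp.single_apply]

@[simp] lemma coeff_add (f g : SkewPoly R σ δ) (n : ℕ) :
    coeff (f + g) n = coeff f n + coeff g n := rfl

@[simp] lemma coeff_zero (n : ℕ) : coeff (σ := σ) (δ := δ) 0 n = 0 := rfl

@[simp] lemma coeff_neg (f : SkewPoly R σ δ) (n : ℕ) : coeff (-f) n = - coeff f n := rfl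

@[simp] lemma coeff_smul (c : ℂ) (f : SkewPoly R σ δ) (n : ℕ) :
    coeff (c • f) n = c • coeff f n := rfl

@[ext] lemma ext {f g : SkewPoly R σ δ} (h : ∀ n, coeff f n = coeff g n) : f = g :=
  Finsupp.ext h

@[simp] lemma mono_zero (n : ℕ) : (mono n 0 : SkewPoly R σ δ) = 0 := Finsupp.single_zero n

lemma mono_add (n : ℕ) (r s : R) :
    (mono n (r + s) : SkewPoly R σ δ) = mono n r + mono n s := Finsupp.single_add n r s

/-- Left multiplication by a constant, coefficientwise. -/
def lmul (r : R) : SkewPoly R σ δ →ₗ[ℂ] SkewPoly R σ δ :=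
  Finsupp.mapRange.linearMap (LinearMap.mulLeft ℂ r)

@[simp] lemma coeff_lmul (r : R) (f : SkewPoly R σ δ) (n : ℕ) :
    coeff (lmul r f) n = r * coeff f n := by
  rfl

@[simp] lemma lmul_mono (r : R) (m : ℕ) (s : R) :
    lmul (σ := σ) (δ := δ) r (mono m s) = mono m (r * s) := by
  ext n
  simp [coeff_mono, mul_ite]

@[simp] lemma lmul_zero_map : (lmul 0 : SkewPoly R σ δ →ₗ[ℂ] SkewPoly R σ δ) = 0 := by
  apply LinearMap.ext
  intro f
  ext n
  simp

lemma lmul_add_map (r s : R) :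
    (lmul (r + s) : SkewPoly R σ δ →ₗ[ℂ] SkewPoly R σ δ) = lmul r + lmul s := by
  apply LinearMap.ext
  intro f
  ext n
  simp [add_mul]

lemma lmul_comp (r s : R) (f : SkewPoly R σ δ) : lmul r (lmul s f) = lmul (r * s) f := by
  ext n
  simp [mul_assoc]

@[simp] lemma lmul_one_map (f : SkewPoly R σ δ) : lmul 1 f = f := by
  ext n; simp

/-- "Multiplication by X on the left" operator. -/
def T : SkewPoly R σ δ →ₗ[ℂ] SkewPoly R σ δ :=
  Finsupp.lsum ℂ fun n =>
    (Finsupp.lsingle (n + 1)).comp σ.toLinearMap + (Finsupp.lsingle n).comp δ.lin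

@[simp] lemma T_mono (m : ℕ) (s : R) :
    T (mono m s : SkewPoly R σ δ) = mono (m + 1) (σ s) + mono m (δ.lin s) := by
  show (Finsupp.lsum ℂ (fun n => (Finsupp.lsingle (n + 1)).comp σ.toLinearMap + (Finsupp.lsingle n).comp δ.lin) : (ℕ →₀ R) →ₗ[ℂ] (ℕ →₀ R)) (Finsupp.single m s) = _
  rw [Finsupp.lsum_single]
  rfl

instance : Mul (SkewPoly R σ δ) :=
  ⟨fun f g => (show ℕ →₀ R from f).sum fun n r => lmul r ((T ^ n) g)⟩

lemma mul_def (f g : SkewPoly R σ δ) :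
    f * g = (show ℕ →₀ R from f).sum fun n r => lmul r ((T ^ n) g) := rfl

lemma mono_mul (n : ℕ) (r : R) (g : SkewPoly R σ δ) :
    mono n r * g = lmul r ((T ^ n) g) := by
  rw [mul_def]
  exact Finsupp.sum_single_index (by simp)

lemma add_mul' (f g h : SkewPoly R σ δ) : (f + g) * h = f * h + g * h := by
  rw [mul_def, mul_def, mul_def]
  exact Finsupp.sum_add_index (by simp) (by intro n _ r s; rw [lmul_add_map]; rfl)

lemma mul_add' (f g h : SkewPoly R σ δ) : f * (g + h) = f * g + f * h := by
  rw [mul_def, mul_def, mul_def, ← Finsupp.sum_add]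
  congr 1; ext n r; simp

lemma zero_mul' (f : SkewPoly R σ δ) : 0 * f = 0 := by
  rw [mul_def]; exact Finsupp.sum_zero_index

lemma mul_zero' (f : SkewPoly R σ δ) : f * 0 = 0 := by
  rw [mul_def]
  simp only [map_zero]
  exact Finsupp.sum_fun_zero _

lemma smul_mul (c : ℂ) (f g : SkewPoly R σ δ) : (c • f) * g = c • (f * g) := by
  rw [mul_def, mul_def]
  dsimp only
  erw [Finsupp.sum_smul_index' (by simp)]
  erw [Finsupp.smul_sum]
  congr 1
  funext n r
  apply ext
  intro m
  simp [smul_mul_assoc]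

lemma mul_smul_right (c : ℂ) (f g : SkewPoly R σ δ) : f * (c • g) = c • (f * g) := by
  rw [mul_def, mul_def, Finsupp.smul_sum]
  congr 1; ext n r
  rw [map_smul, map_smul]

end SkewPoly

section P2
variable {R : Type} [Ring R] [Algebra ℂ R] {σ : R ≃ₐ[ℂ] R} {δ : SkewDer R σ}
namespace SkewPoly

lemma induction_on {p : SkewPoly R σ δ → Prop} (f : SkewPoly R σ δ) (h0 : p 0)
    (hadd : ∀ f g : SkewPoly R σ δ, p f → p g → p (f + g))
    (hmono : ∀ n r, p (mono n r)) : p f :=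
  Finsupp.induction_linear f h0 (fun a b ha hb => hadd a b ha hb) (fun n r => hmono n r)

lemma der_one : δ.lin 1 = 0 := by
  have h := δ.leibniz 1 1
  simp at h
  exact h

lemma T_lmul (r : R) (g : SkewPoly R σ δ) :
    T (lmul r g) = lmul (σ r) (T g) + lmul (δ.lin r) g := by
  induction g using induction_on with
  | h0 => simp
  | hadd f g hf hg =>
      simp only [map_add, hf, hg]
      abel
  | hmono m s =>
      rw [lmul_mono, T_mono, T_mono, map_add, lmul_mono, lmul_mono, lmul_mono]
      rw [map_mul, δ.leibniz, mono_add]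
      abel

lemma lmul_mul (r : R) (g h : SkewPoly R σ δ) : (lmul r g) * h = lmul r (g * h) := by
  induction g using induction_on with
  | h0 => rw [map_zero, zero_mul', map_zero]
  | hadd f g hf hg => rw [map_add, add_mul', add_mul', map_add, hf, hg]
  | hmono m s => rw [lmul_mono, mono_mul, mono_mul, lmul_comp]

lemma T_mul (g h : SkewPoly R σ δ) : (T g) * h = T (g * h) := by
  induction g using induction_on with
  | h0 => rw [map_zero, zero_mul', map_zero]
  | hadd f g hf hg => rw [map_add, add_mul', hf, hg, add_mul', map_add]
  | hmono m s =>
      rw [T_mono, add_mul', mono_mul, mono_mul, mono_mul, T_lmul]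
      rw [pow_succ']
      rfl

lemma Tpow_mul (n : ℕ) (g h : SkewPoly R σ δ) : ((T ^ n) g) * h = (T ^ n) (g * h) := by
  induction n with
  | zero => rfl
  | succ n ih =>
      rw [pow_succ', Module.End.mul_apply, T_mul, ih, Module.End.mul_apply]

lemma mul_assoc' (f g h : SkewPoly R σ δ) : f * g * h = f * (g * h) := by
  induction f using induction_on with
  | h0 => rw [zero_mul', zero_mul', zero_mul']
  | hadd a b ha hb => rw [add_mul', add_mul', add_mul', ha, hb]
  | hmono n r => rw [mono_mul, mono_mul, lmul_mul, Tpow_mul]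

instance : One (SkewPoly R σ δ) := ⟨mono 0 1⟩

lemma one_def : (1 : SkewPoly R σ δ) = mono 0 1 := rfl

lemma one_mul' (f : SkewPoly R σ δ) : 1 * f = f := by
  rw [one_def, mono_mul, pow_zero]
  simp

lemma Tpow_one (n : ℕ) : (T ^ n) (1 : SkewPoly R σ δ) = mono n 1 := by
  induction n with
  | zero => rfl
  | succ n ih =>
      rw [pow_succ', Module.End.mul_apply, ih, T_mono, der_one, mono_zero, add_zero, map_one]

lemma mul_one' (f : SkewPoly R σ δ) : f * 1 = f := by
  rw [mul_def]
  have : ∀ n r, lmul r ((T ^ n) (1 : SkewPoly R σ δ)) = mono n r := by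
    intro n r
    rw [Tpow_one, lmul_mono, mul_one]
  simp only [this]
  exact Finsupp.sum_single f

instance : Ring (SkewPoly R σ δ) :=
  { (inferInstance : AddCommGroup (SkewPoly R σ δ)) with
    mul := (· * ·)
    one := 1
    left_distrib := mul_add'
    right_distrib := add_mul'
    zero_mul := zero_mul'
    mul_zero := mul_zero'
    mul_assoc := mul_assoc'
    one_mul := one_mul'
    mul_one := mul_one' }

instance : Algebra ℂ (SkewPoly R σ δ) :=
  Algebra.ofModule smul_mul mul_smul_right

lemma smul_mono (c : ℂ) (n : ℕ) (r : R) :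
    c • (mono n r : SkewPoly R σ δ) = mono n (c • r) := (Finsupp.smul_single c n r).symm ▸ rfl

lemma mono_zero_mul (r s : R) :
    (mono 0 r : SkewPoly R σ δ) * mono 0 s = mono 0 (r * s) := by
  rw [show ((mono 0 r : SkewPoly R σ δ) * mono 0 s) = lmul r ((T ^ 0) (mono 0 s)) from
    mono_mul 0 r _, pow_zero]
  exact lmul_mono r 0 s

/-- The canonical embedding `R →ₐ SkewPoly R σ δ`. -/
def ι : R →ₐ[ℂ] SkewPoly R σ δ where
  toFun r := mono 0 r
  map_one' := rfl
  map_mul' r s := (mono_zero_mul r s).symm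
  map_zero' := mono_zero 0
  map_add' := mono_add 0
  commutes' c := by
    rw [Algebra.algebraMap_eq_smul_one, Algebra.algebraMap_eq_smul_one (A := SkewPoly R σ δ),
      one_def, smul_mono]

@[simp] lemma ι_apply (r : R) : (ι r : SkewPoly R σ δ) = mono 0 r := rfl

end SkewPoly
end P2

section P3
variable {R : Type} [Ring R] [Algebra ℂ R] {σ : R ≃ₐ[ℂ] R} {δ : SkewDer R σ}
namespace SkewPoly

def X : SkewPoly R σ δ := mono 1 1

lemma X_mul (f : SkewPoly R σ δ) : X * f = T f := by
  rw [X, mono_mul, pow_one, lmul_one_map]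

lemma X_pow (n : ℕ) : (X : SkewPoly R σ δ) ^ n = mono n 1 := by
  induction n with
  | zero => rfl
  | succ n ih =>
      rw [pow_succ', ih, X_mul, T_mono, der_one, mono_zero, add_zero, map_one]

lemma mono_decomp (n : ℕ) (r : R) : (mono n r : SkewPoly R σ δ) = ι r * X ^ n := by
  rw [X_pow, ι_apply, show ((mono 0 r : SkewPoly R σ δ) * mono n 1) = lmul r ((T ^ 0) (mono n 1))
    from mono_mul 0 r _, pow_zero]
  simp

lemma X_mul_ι (r : R) : (X : SkewPoly R σ δ) * ι r = ι (σ r) * X + ι (δ.lin r) := by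
  rw [X_mul, ι_apply, T_mono]
  have h1 := mono_decomp (σ := σ) (δ := δ) 1 (σ r)
  rw [pow_one] at h1
  show mono 1 (σ r) + mono 0 (δ.lin r) = _
  rw [← h1]
  rfl

/-- Induction principle: membership in subalgebras containing the generators. -/
lemma mem_of_mem_gen (S : Subalgebra ℂ (SkewPoly R σ δ)) (hι : ∀ r, ι r ∈ S) (hX : X ∈ S)
    (f : SkewPoly R σ δ) : f ∈ S := by
  induction f using induction_on with
  | h0 => exact zero_mem S
  | hadd a b ha hb => exact add_mem ha hb
  | hmono n r =>
      rw [mono_decomp]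
      exact mul_mem (hι r) (pow_mem hX n)

section Lift
variable {A : Type} [Ring A] [Algebra ℂ A] (φ : R →ₐ[ℂ] A) (x : A)

def liftFun (f : SkewPoly R σ δ) : A := (show ℕ →₀ R from f).sum fun n r => φ r * x ^ n

lemma liftFun_mono (n : ℕ) (r : R) :
    liftFun φ x (mono n r : SkewPoly R σ δ) = φ r * x ^ n :=
  Finsupp.sum_single_index (by simp)

lemma liftFun_add (f g : SkewPoly R σ δ) :
    liftFun φ x (f + g) = liftFun φ x f + liftFun φ x g :=
  Finsupp.sum_add_index (by simp) (by intro n _ r s; rw [map_add, add_mul])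

lemma liftFun_zero : liftFun φ x (0 : SkewPoly R σ δ) = 0 := Finsupp.sum_zero_index

lemma liftFun_smul (c : ℂ) (f : SkewPoly R σ δ) :
    liftFun φ x (c • f) = c • liftFun φ x f := by
  unfold liftFun
  dsimp only
  erw [Finsupp.sum_smul_index' (by simp), Finsupp.smul_sum]
  congr 1; ext n r
  rw [map_smul, smul_mul_assoc]

lemma liftFun_lmul (r : R) (g : SkewPoly R σ δ) :
    liftFun φ x (lmul r g) = φ r * liftFun φ x g := by
  induction g using induction_on with
  | h0 => rw [map_zero, liftFun_zero, mul_zero]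
  | hadd a b ha hb => rw [map_add, liftFun_add, liftFun_add, ha, hb, mul_add]
  | hmono m s => rw [lmul_mono, liftFun_mono, liftFun_mono, map_mul, mul_assoc]

variable (hx : ∀ r, x * φ r = φ (σ r) * x + φ (δ.lin r))

include hx in
lemma liftFun_T (g : SkewPoly R σ δ) : liftFun φ x (T g) = x * liftFun φ x g := by
  induction g using induction_on with
  | h0 => rw [map_zero, liftFun_zero, mul_zero]
  | hadd a b ha hb => rw [map_add, liftFun_add, liftFun_add, ha, hb, mul_add]
  | hmono m s =>
      rw [T_mono, liftFun_add, liftFun_mono, liftFun_mono, liftFun_mono, pow_succ',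
        ← mul_assoc, ← mul_assoc, ← add_mul, ← hx]

include hx in
lemma liftFun_mul (f g : SkewPoly R σ δ) :
    liftFun φ x (f * g) = liftFun φ x f * liftFun φ x g := by
  induction f using induction_on with
  | h0 => rw [zero_mul', liftFun_zero, zero_mul]
  | hadd a b ha hb => rw [add_mul', liftFun_add, liftFun_add, ha, hb, add_mul]
  | hmono n r =>
      rw [mono_mul, liftFun_lmul, liftFun_mono]
      have : ∀ g : SkewPoly R σ δ, liftFun φ x ((T ^ n) g) = x ^ n * liftFun φ x g := by
        induction n with
        | zero => intro g; rw [pow_zero, pow_zero, one_mul]; rfl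
        | succ n ih =>
            intro g
            rw [pow_succ, pow_succ', Module.End.mul_apply, ih (T g), liftFun_T φ x hx,
              mul_assoc, ← mul_assoc, ← mul_assoc, ← pow_succ, ← pow_succ']
      rw [this, ← mul_assoc]

/-- Universal property of skew polynomial rings. -/
def lift : SkewPoly R σ δ →ₐ[ℂ] A :=
  AlgHom.mk'
    { toFun := liftFun φ x
      map_one' := by rw [one_def, liftFun_mono, map_one, pow_zero, one_mul]
      map_mul' := liftFun_mul φ x hx
      map_zero' := liftFun_zero (σ := σ) (δ := δ) φ x
      map_add' := liftFun_add φ x }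
    (liftFun_smul φ x)

lemma lift_apply (f : SkewPoly R σ δ) : lift φ x hx f = liftFun φ x f := rfl

@[simp] lemma lift_ι (r : R) : lift φ x hx (ι r) = φ r := by
  rw [lift_apply, ι_apply, liftFun_mono, pow_zero, mul_one]

@[simp] lemma lift_X : lift φ x hx (X : SkewPoly R σ δ) = x := by
  rw [lift_apply, X, liftFun_mono, map_one, pow_one, one_mul]

end Lift

lemma algHom_ext {A : Type} [Ring A] [Algebra ℂ A] {F G : SkewPoly R σ δ →ₐ[ℂ] A}
    (hι : ∀ r, F (ι r) = G (ι r)) (hX : F X = G X) : F = G := by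
  apply AlgHom.ext
  intro f
  induction f using induction_on with
  | h0 => rw [map_zero, map_zero]
  | hadd a b ha hb => rw [map_add, map_add, ha, hb]
  | hmono n r => rw [mono_decomp, map_mul, map_mul, map_pow, map_pow, hι, hX]

lemma coeff_sum {α M : Type} [Zero M] (p : α →₀ M) (F : α → M → SkewPoly R σ δ) (j : ℕ) :
    coeff (p.sum F) j = p.sum fun a b => coeff (F a b) j :=
  Finsupp.sum_apply

lemma coeff_mul (f g : SkewPoly R σ δ) (j : ℕ) :
    coeff (f * g) j = (show ℕ →₀ R from f).sum fun n r => r * coeff ((T ^ n) g) j := by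
  rw [mul_def, coeff_sum]
  rfl

lemma coeff_T_zero (g : SkewPoly R σ δ) : coeff (T g) 0 = δ.lin (coeff g 0) := by
  induction g using induction_on with
  | h0 => simp
  | hadd a b ha hb => rw [map_add, coeff_add, ha, hb, coeff_add, map_add]
  | hmono m s =>
      rw [T_mono, coeff_add, coeff_mono, coeff_mono, coeff_mono]
      by_cases h : m = 0 <;> simp [h]

lemma coeff_T_succ (g : SkewPoly R σ δ) (j : ℕ) :
    coeff (T g) (j + 1) = σ (coeff g j) + δ.lin (coeff g (j + 1)) := by
  induction g using induction_on with
  | h0 => simp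
  | hadd a b ha hb =>
      rw [map_add, coeff_add, ha, hb, coeff_add, coeff_add, map_add, map_add]
      abel
  | hmono m s =>
      rw [T_mono, coeff_add, coeff_mono, coeff_mono, coeff_mono, coeff_mono]
      by_cases h : m = j <;> by_cases h2 : m = j + 1
      · omega
      · simp [h, h2]
      · simp [h, h2]
      · simp [h, h2]

lemma Tpow_top (k : ℕ) (g : SkewPoly R σ δ) (m : ℕ) (hg : ∀ j, m < j → coeff g j = 0) :
    coeff ((T ^ k) g) (m + k) = (σ ^ k) (coeff g m) ∧
      ∀ j, m + k < j → coeff ((T ^ k) g) j = 0 := by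
  induction k with
  | zero => exact ⟨rfl, by simpa using hg⟩
  | succ k ih =>
      have hb : ∀ j, m + k < j → coeff ((T ^ k) g) j = 0 := ih.2
      constructor
      · rw [pow_succ', Module.End.mul_apply, show m + (k + 1) = (m + k) + 1 from rfl,
          coeff_T_succ, ih.1, hb _ (by omega), map_zero, add_zero]
        rw [pow_succ']
        rfl
      · intro j hj
        rw [pow_succ', Module.End.mul_apply]
        cases j with
        | zero => omega
        | succ j' =>
            rw [coeff_T_succ, hb _ (by omega), hb _ (by omega), map_zero, map_zero, add_zero]

lemma mul_coeff_top (f g : SkewPoly R σ δ) (n m : ℕ)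
    (hf : ∀ j, n < j → coeff f j = 0) (hg : ∀ j, m < j → coeff g j = 0) :
    coeff (f * g) (n + m) = coeff f n * (σ ^ n) (coeff g m) := by
  rw [coeff_mul]
  rw [Finsupp.sum]
  rw [Finset.sum_eq_single n]
  · rw [show n + m = m + n from Nat.add_comm n m, (Tpow_top n g m hg).1]
    rfl
  · intro b hb hbn
    by_cases hlt : n < b
    · rw [show (show ℕ →₀ R from f) b = coeff f b from rfl, hf b hlt, zero_mul]
    · rw [(Tpow_top b g m hg).2 (n + m) (by omega), mul_zero]
  · intro hn
    have h0 : coeff f n = 0 := Finsupp.notMem_support_iff.mp hn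
    rw [show (show ℕ →₀ R from f) n = coeff f n from rfl, h0, zero_mul]

lemma exists_top (f : SkewPoly R σ δ) (hf : f ≠ 0) :
    ∃ n, coeff f n ≠ 0 ∧ ∀ j, n < j → coeff f j = 0 := by
  have hs : (show ℕ →₀ R from f).support.Nonempty := by
    rw [Finsupp.support_nonempty_iff]
    exact hf
  refine ⟨(show ℕ →₀ R from f).support.max' hs, ?_, ?_⟩
  · exact Finsupp.mem_support_iff.mp (Finset.max'_mem _ hs)
  · intro j hj
    by_contra h
    exact absurd (Finset.le_max' _ j (Finsupp.mem_support_iff.mpr h)) (by omega)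

instance [Nontrivial R] : Nontrivial (SkewPoly R σ δ) := by
  refine ⟨1, 0, fun h => ?_⟩
  have : coeff (1 : SkewPoly R σ δ) 0 = coeff (0 : SkewPoly R σ δ) 0 := by rw [h]
  rw [one_def, coeff_mono_same, coeff_zero] at this
  exact one_ne_zero this

instance [IsDomain R] : NoZeroDivisors (SkewPoly R σ δ) := by
  refine ⟨fun {f g} hfg => ?_⟩
  by_contra h
  push_neg at h
  obtain ⟨hf, hg⟩ := h
  obtain ⟨n, hfn, hfb⟩ := exists_top f hf
  obtain ⟨m, hgm, hgb⟩ := exists_top g hg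
  have := mul_coeff_top f g n m hfb hgb
  rw [hfg, coeff_zero] at this
  have hσ : (σ ^ n) (coeff g m) ≠ 0 := by
    intro h0
    exact hgm ((σ ^ n).toEquiv.injective (by simpa using h0))
  exact (mul_ne_zero hfn hσ) this.symm

instance [IsDomain R] : IsDomain (SkewPoly R σ δ) := NoZeroDivisors.to_isDomain _

end SkewPoly
end P3

section P4
variable {R : Type} [Ring R] [Algebra ℂ R] {σ : R ≃ₐ[ℂ] R} {δ : SkewDer R σ}
namespace SkewPoly

lemma ι_mul (r : R) (f : SkewPoly R σ δ) : ι r * f = lmul r f := by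
  rw [ι_apply, mono_mul, pow_zero]
  rfl

lemma Xpow_mul (k : ℕ) (f : SkewPoly R σ δ) : (X : SkewPoly R σ δ) ^ k * f = (T ^ k) f := by
  rw [X_pow, mono_mul, lmul_one_map]

lemma sigma_pow_succ_apply (n : ℕ) (y : R) : (σ ^ (n + 1)) y = σ ((σ ^ n) y) := by
  rw [pow_succ']
  rfl

lemma sigma_symm_pow_succ_apply (n : ℕ) (z : R) :
    (σ ^ (n + 1) : R ≃ₐ[ℂ] R).symm (σ z) = (σ ^ n : R ≃ₐ[ℂ] R).symm z := by
  rw [(AlgEquiv.symm_apply_eq _), sigma_pow_succ_apply, AlgEquiv.apply_symm_apply]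

lemma sigma_pow_add_apply (k m : ℕ) (y : R) : (σ ^ k) ((σ ^ m) y) = (σ ^ (m + k)) y := by
  induction k with
  | zero => rfl
  | succ k ih =>
      rw [sigma_pow_succ_apply, ih, show m + (k + 1) = (m + k) + 1 by omega,
        sigma_pow_succ_apply]

/-- `f` has degree at most `n`. -/
def DegLE (f : SkewPoly R σ δ) (n : ℕ) : Prop := ∀ j, n < j → coeff f j = 0

lemma degLE_mul {f g : SkewPoly R σ δ} {n m : ℕ} (hf : DegLE f n) (hg : DegLE g m) :
    DegLE (f * g) (n + m) := by
  intro j hj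
  rw [coeff_mul, Finsupp.sum]
  apply Finset.sum_eq_zero
  intro p hp
  by_cases hpn : n < p
  · rw [show (show ℕ →₀ R from f) p = coeff f p from rfl, hf p hpn, zero_mul]
  · rw [(Tpow_top p g m hg).2 j (by omega), mul_zero]

lemma degLE_lmul {f : SkewPoly R σ δ} {n : ℕ} (r : R) (hf : DegLE f n) :
    DegLE (lmul r f) n := fun j hj => by rw [coeff_lmul, hf j hj, mul_zero]

lemma degLE_X : DegLE (X : SkewPoly R σ δ) 1 := by
  intro j hj
  rw [X, coeff_mono, if_neg (by omega)]

lemma degLE_mono (n : ℕ) (r : R) : DegLE (mono n r : SkewPoly R σ δ) n := by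
  intro j hj
  rw [coeff_mono, if_neg (by omega)]

section LeftHBT
variable (I : Ideal (SkewPoly R σ δ))

/-- The ideal of (`σ⁻ⁿ`-twisted) leading coefficients of elements of `I` of degree `≤ n`. -/
def lcIdeal (n : ℕ) : Ideal R where
  carrier := {x | ∃ f, f ∈ I ∧ DegLE f n ∧ (σ ^ n : R ≃ₐ[ℂ] R).symm (coeff f n) = x}
  add_mem' := by
    rintro a b ⟨f, hf, hbf, rfl⟩ ⟨g, hg, hbg, rfl⟩
    exact ⟨f + g, I.add_mem hf hg,
      fun j hj => by rw [coeff_add, hbf j hj, hbg j hj, add_zero],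
      by rw [coeff_add, map_add]⟩
  zero_mem' := ⟨0, I.zero_mem, fun j _ => rfl, by rw [coeff_zero, map_zero]⟩
  smul_mem' := by
    rintro r x ⟨f, hf, hb, rfl⟩
    refine ⟨ι ((σ ^ n) r) * f, I.mul_mem_left _ hf, ?_, ?_⟩
    · rw [ι_mul]
      exact degLE_lmul _ hb
    · rw [ι_mul, coeff_lmul, map_mul, AlgEquiv.symm_apply_apply]
      rfl

lemma lcIdeal_mono : Monotone (lcIdeal (σ := σ) (δ := δ) I) := by
  apply monotone_nat_of_le_succ
  intro n x hx
  obtain ⟨f, hf, hb, rfl⟩ := hx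
  refine ⟨X * f, I.mul_mem_left _ hf, ?_, ?_⟩
  · rw [X_mul]
    intro j hj
    cases j with
    | zero => omega
    | succ j' => rw [coeff_T_succ, hb j' (by omega), hb (j' + 1) (by omega), map_zero, map_zero,
        add_zero]
  · rw [X_mul, coeff_T_succ, hb (n + 1) (by omega), map_zero, add_zero,
      sigma_symm_pow_succ_apply]

theorem isNoetherianRing [IsNoetherianRing R] : IsNoetherianRing (SkewPoly R σ δ) := by
  rw [isNoetherianRing_iff_ideal_fg]
  intro I
  -- stabilization of the chain of leading coefficient ideals
  obtain ⟨n₀, hn₀⟩ := (monotone_stabilizes_iff_noetherian.mpr inferInstance)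
    ⟨lcIdeal I, lcIdeal_mono I⟩
  -- generators of the leading coefficient ideals
  have hFG : ∀ n : ℕ, ∃ G : Set R, G.Finite ∧ Ideal.span G = lcIdeal I n := by
    intro n
    obtain ⟨G, hG⟩ := Submodule.fg_def.mp (IsNoetherian.noetherian (lcIdeal I n))
    exact ⟨G, hG.1, hG.2⟩
  choose G hGfin hGspan using hFG
  -- witnesses
  have hex : ∀ n (x : R), ∃ f : SkewPoly R σ δ,
      x ∈ G n → f ∈ I ∧ DegLE f n ∧ (σ ^ n : R ≃ₐ[ℂ] R).symm (coeff f n) = x := by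
    intro n x
    by_cases h : x ∈ G n
    · have hx : x ∈ lcIdeal I n := by
        rw [← hGspan n]
        exact Ideal.subset_span h
      obtain ⟨f, hf⟩ := hx
      exact ⟨f, fun _ => hf⟩
    · exact ⟨0, fun hc => absurd hc h⟩
  choose wit hwit using hex
  set W : Set (SkewPoly R σ δ) := ⋃ n ∈ Finset.range (n₀ + 1), wit n '' (G n) with hW
  have hWfin : W.Finite := Set.Finite.biUnion (Finset.range (n₀ + 1)).finite_toSet
    (fun n _ => (hGfin n).image (wit n))
  have hWI : W ⊆ (I : Set (SkewPoly R σ δ)) := by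
    rintro f hf
    simp only [hW, Set.mem_iUnion] at hf
    obtain ⟨n, _, x, hx, rfl⟩ := hf
    exact (hwit n x hx).1
  set J : Ideal (SkewPoly R σ δ) := Ideal.span W with hJ
  have hJI : J ≤ I := Ideal.span_le.mpr hWI
  -- the key reduction
  have key : ∀ d f, f ∈ I → DegLE f d → f ∈ J := by
    intro d
    induction d using Nat.strong_induction_on with
    | _ d IH =>
      intro f hfI hbd
      set m := min d n₀ with hm
      set k := d - m with hk
      have hdk : d = m + k := by omega
      -- the leading coefficient lies in the m-th leading coefficient ideal
      have hlc : (σ ^ d : R ≃ₐ[ℂ] R).symm (coeff f d) ∈ lcIdeal I m := by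
        have h1 : (σ ^ d : R ≃ₐ[ℂ] R).symm (coeff f d) ∈ lcIdeal I d := ⟨f, hfI, hbd, rfl⟩
        rcases le_or_gt d n₀ with hle | hlt
        · rwa [show m = d by omega]
        · have hstab := hn₀ d (by omega)
          simp only [OrderHom.coe_mk] at hstab
          rw [show m = n₀ by omega, hstab]
          exact h1
      rw [← hGspan m] at hlc
      obtain ⟨c, hcsupp, hcsum⟩ := Submodule.mem_span_set.mp hlc
      -- the correction term
      set g : SkewPoly R σ δ :=
        c.sum fun y cy => ι ((σ ^ d) cy) * ((X : SkewPoly R σ δ) ^ k * wit m y) with hg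
      have hterm : ∀ y ∈ c.support,
          (ι ((σ ^ d) (c y)) * ((X : SkewPoly R σ δ) ^ k * wit m y)) ∈ J ∧
          DegLE (ι ((σ ^ d) (c y)) * ((X : SkewPoly R σ δ) ^ k * wit m y)) d ∧
          coeff (ι ((σ ^ d) (c y)) * ((X : SkewPoly R σ δ) ^ k * wit m y)) d
            = (σ ^ d) (c y * y) := by
        intro y hy
        have hyG : y ∈ G m := hcsupp hy
        obtain ⟨hwI, hwb, hwc⟩ := hwit m y hyG
        have hwmem : wit m y ∈ J := by
          apply Ideal.subset_span
          simp only [hW, Set.mem_iUnion]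
          exact ⟨m, Finset.mem_range.mpr (by omega), y, hyG, rfl⟩
        have hcoeffw : coeff (wit m y) m = (σ ^ m) y := (AlgEquiv.symm_apply_eq _).mp hwc
        refine ⟨J.mul_mem_left _ (J.mul_mem_left _ hwmem), ?_, ?_⟩
        · rw [ι_mul, Xpow_mul]
          apply degLE_lmul
          intro j hj
          exact (Tpow_top k (wit m y) m hwb).2 j (by omega)
        · rw [ι_mul, Xpow_mul, coeff_lmul, hdk, (Tpow_top k (wit m y) m hwb).1, hcoeffw,
            sigma_pow_add_apply, ← hdk, map_mul]
      have hgJ : g ∈ J := Ideal.sum_mem J (fun y hy => (hterm y hy).1)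
      have hgb : DegLE g d := by
        intro j hj
        rw [hg, coeff_sum, Finsupp.sum]
        exact Finset.sum_eq_zero fun y hy => (hterm y hy).2.1 j hj
      have hgc : coeff g d = coeff f d := by
        rw [hg, coeff_sum, Finsupp.sum]
        rw [Finset.sum_congr rfl (fun y hy => (hterm y hy).2.2)]
        rw [← map_sum]
        have hsum : (∑ y ∈ c.support, c y * y) = (σ ^ d : R ≃ₐ[ℂ] R).symm (coeff f d) := by
          rw [← hcsum]
          rfl
        rw [hsum, AlgEquiv.apply_symm_apply]
      have hsub : ∀ j, coeff (f - g) j = coeff f j - coeff g j := by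
        intro j
        rw [sub_eq_add_neg, coeff_add, coeff_neg, sub_eq_add_neg]
      have hfgI : f - g ∈ I := I.sub_mem hfI (hJI hgJ)
      have hfgd : coeff (f - g) d = 0 := by rw [hsub, hgc, sub_self]
      have hfgb : DegLE (f - g) d := by
        intro j hj
        rw [hsub, hbd j hj, hgb j hj, sub_self]
      have hfinal : f - g ∈ J := by
        cases d with
        | zero =>
            have : f - g = 0 := by
              apply ext
              intro j
              cases j with
              | zero => rw [hfgd, coeff_zero]
              | succ j' => rw [hfgb (j' + 1) (by omega), coeff_zero]
            rw [this]
            exact J.zero_mem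
        | succ d' =>
            apply IH d' (by omega) (f - g) hfgI
            intro j hj
            rcases Nat.lt_or_ge (d' + 1) j with h2 | h2
            · exact hfgb j h2
            · rw [show j = d' + 1 by omega]
              exact hfgd
      have : f = (f - g) + g := by abel
      rw [this]
      exact J.add_mem hfinal hgJ
  -- conclude
  have hIJ : I ≤ J := by
    intro f hf
    by_cases h0 : f = 0
    · rw [h0]; exact J.zero_mem
    · obtain ⟨n, _, hb⟩ := exists_top f h0
      exact key n f hf hb
  exact Submodule.fg_def.mpr ⟨W, hWfin, le_antisymm (by rw [← hJ] at *; exact hJI) hIJ⟩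

end LeftHBT
end SkewPoly
end P4

section P5
open MulOpposite
variable {R : Type} [Ring R] [Algebra ℂ R] {σ : R ≃ₐ[ℂ] R} {δ : SkewDer R σ}
namespace SkewPoly

lemma op_finset_sum {α M : Type} [AddCommMonoid M] (s : Finset α) (F : α → M) :
    op (∑ a ∈ s, F a) = ∑ a ∈ s, op (F a) := map_sum (MulOpposite.opAddEquiv) F s

lemma unop_finset_sum {α M : Type} [AddCommMonoid M] (s : Finset α) (F : α → Mᵐᵒᵖ) :
    unop (∑ a ∈ s, F a) = ∑ a ∈ s, unop (F a) :=
  map_sum (MulOpposite.opAddEquiv (α := M)).symm F s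

lemma degLE_iota (s : R) : DegLE (ι s : SkewPoly R σ δ) 0 := by
  rw [ι_apply]
  exact degLE_mono 0 s

lemma coeff_iota (s : R) : coeff (ι s : SkewPoly R σ δ) 0 = s := by
  rw [ι_apply, coeff_mono_same]

section RightHBT
variable (I : Ideal (SkewPoly R σ δ)ᵐᵒᵖ)

/-- Right leading coefficient ideals. -/
def rcIdeal (n : ℕ) : Ideal Rᵐᵒᵖ where
  carrier := {x | ∃ f : SkewPoly R σ δ, op f ∈ I ∧ DegLE f n ∧ op (coeff f n) = x}
  add_mem' := by
    rintro a b ⟨f, hf, hbf, rfl⟩ ⟨g, hg, hbg, rfl⟩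
    refine ⟨f + g, ?_, fun j hj => by rw [coeff_add, hbf j hj, hbg j hj, add_zero],
      by rw [coeff_add, op_add]⟩
    rw [op_add]
    exact I.add_mem hf hg
  zero_mem' := ⟨0, by rw [op_zero]; exact I.zero_mem, fun j _ => rfl, by rw [coeff_zero, op_zero]⟩
  smul_mem' := by
    rintro r x ⟨f, hf, hb, rfl⟩
    refine ⟨f * ι ((σ ^ n : R ≃ₐ[ℂ] R).symm (unop r)), ?_, ?_, ?_⟩
    · rw [op_mul]
      exact I.mul_mem_left _ hf
    · have := degLE_mul hb (degLE_iota (σ := σ) (δ := δ) ((σ ^ n : R ≃ₐ[ℂ] R).symm (unop r)))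
      rwa [Nat.add_zero] at this
    · have := mul_coeff_top f (ι ((σ ^ n : R ≃ₐ[ℂ] R).symm (unop r))) n 0 hb
        (degLE_iota _)
      rw [Nat.add_zero] at this
      rw [this, coeff_iota, AlgEquiv.apply_symm_apply, op_mul, op_unop]
      rfl

lemma rcIdeal_mono : Monotone (rcIdeal (σ := σ) (δ := δ) I) := by
  apply monotone_nat_of_le_succ
  intro n x hx
  obtain ⟨f, hf, hb, rfl⟩ := hx
  refine ⟨f * X, ?_, ?_, ?_⟩
  · rw [op_mul]
    exact I.mul_mem_left _ hf
  · exact degLE_mul hb degLE_X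
  · have := mul_coeff_top f (X : SkewPoly R σ δ) n 1 hb degLE_X
    rw [this, show coeff (X : SkewPoly R σ δ) 1 = 1 from coeff_mono_same 1 1, map_one, mul_one]

theorem isNoetherianRing_op [IsNoetherianRing Rᵐᵒᵖ] :
    IsNoetherianRing (SkewPoly R σ δ)ᵐᵒᵖ := by
  rw [isNoetherianRing_iff_ideal_fg]
  intro I
  obtain ⟨n₀, hn₀⟩ := (monotone_stabilizes_iff_noetherian.mpr inferInstance)
    ⟨rcIdeal I, rcIdeal_mono I⟩
  have hFG : ∀ n : ℕ, ∃ G : Set Rᵐᵒᵖ, G.Finite ∧ Ideal.span G = rcIdeal I n := by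
    intro n
    obtain ⟨G, hG⟩ := Submodule.fg_def.mp (IsNoetherian.noetherian (rcIdeal I n))
    exact ⟨G, hG.1, hG.2⟩
  choose G hGfin hGspan using hFG
  have hex : ∀ n (x : Rᵐᵒᵖ), ∃ f : SkewPoly R σ δ,
      x ∈ G n → op f ∈ I ∧ DegLE f n ∧ op (coeff f n) = x := by
    intro n x
    by_cases h : x ∈ G n
    · have hx : x ∈ rcIdeal I n := by
        rw [← hGspan n]
        exact Ideal.subset_span h
      obtain ⟨f, hf⟩ := hx
      exact ⟨f, fun _ => hf⟩
    · exact ⟨0, fun hc => absurd hc h⟩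
  choose wit hwit using hex
  set W : Set (SkewPoly R σ δ)ᵐᵒᵖ :=
    ⋃ n ∈ Finset.range (n₀ + 1), (fun x => op (wit n x)) '' (G n) with hW
  have hWfin : W.Finite := Set.Finite.biUnion (Finset.range (n₀ + 1)).finite_toSet
    (fun n _ => (hGfin n).image _)
  have hWI : W ⊆ (I : Set (SkewPoly R σ δ)ᵐᵒᵖ) := by
    rintro f hf
    simp only [hW, Set.mem_iUnion] at hf
    obtain ⟨n, _, x, hx, rfl⟩ := hf
    exact (hwit n x hx).1
  set J : Ideal (SkewPoly R σ δ)ᵐᵒᵖ := Ideal.span W with hJ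
  have hJI : J ≤ I := Ideal.span_le.mpr hWI
  have key : ∀ d (f : SkewPoly R σ δ), op f ∈ I → DegLE f d → op f ∈ J := by
    intro d
    induction d using Nat.strong_induction_on with
    | _ d IH =>
      intro f hfI hbd
      set m := min d n₀ with hm
      set k := d - m with hk
      have hdk : d = m + k := by omega
      have hlc : op (coeff f d) ∈ rcIdeal I m := by
        have h1 : op (coeff f d) ∈ rcIdeal I d := ⟨f, hfI, hbd, rfl⟩
        rcases le_or_gt d n₀ with hle | hlt
        · rwa [show m = d by omega]
        · have hstab := hn₀ d (by omega)
          simp only [OrderHom.coe_mk] at hstab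
          rw [show m = n₀ by omega, hstab]
          exact h1
      rw [← hGspan m] at hlc
      obtain ⟨c, hcsupp, hcsum⟩ := Submodule.mem_span_set.mp hlc
      set g : SkewPoly R σ δ :=
        c.sum fun y cy => wit m y * ((X : SkewPoly R σ δ) ^ k * ι ((σ ^ d : R ≃ₐ[ℂ] R).symm (unop cy))) with hg
      have hterm : ∀ y ∈ c.support,
          op (wit m y * ((X : SkewPoly R σ δ) ^ k * ι ((σ ^ d : R ≃ₐ[ℂ] R).symm (unop (c y))))) ∈ J ∧
          DegLE (wit m y * ((X : SkewPoly R σ δ) ^ k * ι ((σ ^ d : R ≃ₐ[ℂ] R).symm (unop (c y))))) d ∧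
          coeff (wit m y * ((X : SkewPoly R σ δ) ^ k * ι ((σ ^ d : R ≃ₐ[ℂ] R).symm (unop (c y))))) d
            = unop y * unop (c y) := by
        intro y hy
        have hyG : y ∈ G m := hcsupp hy
        obtain ⟨hwI, hwb, hwc⟩ := hwit m y hyG
        have hwmem : op (wit m y) ∈ J := by
          apply Ideal.subset_span
          simp only [hW, Set.mem_iUnion]
          exact ⟨m, Finset.mem_range.mpr (by omega), y, hyG, rfl⟩
        have hcoeffw : coeff (wit m y) m = unop y := by
          have h := congrArg unop hwc
          rwa [unop_op] at h
        set s := (σ ^ d : R ≃ₐ[ℂ] R).symm (unop (c y)) with hs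
        have hub : DegLE ((X : SkewPoly R σ δ) ^ k * ι s) k := by
          rw [Xpow_mul, ι_apply]
          intro j hj
          exact (Tpow_top k (mono 0 s) 0 (degLE_mono 0 s)).2 j (by omega)
        have huc : coeff ((X : SkewPoly R σ δ) ^ k * ι s) k = (σ ^ k) s := by
          rw [Xpow_mul, ι_apply]
          have h := (Tpow_top k (mono 0 (σ := σ) (δ := δ) s) 0 (degLE_mono 0 s)).1
          rwa [Nat.zero_add, coeff_mono_same] at h
        refine ⟨?_, ?_, ?_⟩
        · rw [op_mul]
          exact J.mul_mem_left _ hwmem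
        · have := degLE_mul hwb hub
          rwa [← hdk] at this
        · have := mul_coeff_top (wit m y) _ m k hwb hub
          rw [← hdk] at this
          rw [this, huc, hcoeffw, sigma_pow_add_apply, show k + m = d by omega, hs,
            AlgEquiv.apply_symm_apply]
      have hgJ : op g ∈ J := by
        rw [hg, Finsupp.sum, op_finset_sum]
        exact Ideal.sum_mem J (fun y hy => (hterm y hy).1)
      have hgb : DegLE g d := by
        intro j hj
        rw [hg, coeff_sum, Finsupp.sum]
        exact Finset.sum_eq_zero fun y hy => (hterm y hy).2.1 j hj
      have hgc : coeff g d = coeff f d := by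
        rw [hg, coeff_sum, Finsupp.sum]
        rw [Finset.sum_congr rfl (fun y hy => (hterm y hy).2.2)]
        have h2 : (∑ y ∈ c.support, unop y * unop (c y))
            = unop (∑ y ∈ c.support, c y • y) := by
          rw [unop_finset_sum]
          exact Finset.sum_congr rfl fun y _ => by rw [smul_eq_mul, unop_mul]
        rw [h2, show (∑ y ∈ c.support, c y • y) = op (coeff f d) from hcsum, unop_op]
      have hsub : ∀ j, coeff (f - g) j = coeff f j - coeff g j := by
        intro j
        rw [sub_eq_add_neg, coeff_add, coeff_neg, sub_eq_add_neg]
      have hfgI : op (f - g) ∈ I := by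
        rw [op_sub]
        exact I.sub_mem hfI (hJI hgJ)
      have hfgd : coeff (f - g) d = 0 := by rw [hsub, hgc, sub_self]
      have hfgb : DegLE (f - g) d := by
        intro j hj
        rw [hsub, hbd j hj, hgb j hj, sub_self]
      have hfinal : op (f - g) ∈ J := by
        cases d with
        | zero =>
            have hz : f - g = 0 := by
              apply ext
              intro j
              cases j with
              | zero => rw [hfgd, coeff_zero]
              | succ j' => rw [hfgb (j' + 1) (by omega), coeff_zero]
            rw [hz, op_zero]
            exact J.zero_mem
        | succ d' =>
            apply IH d' (by omega) (f - g) hfgI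
            intro j hj
            rcases Nat.lt_or_ge (d' + 1) j with h2 | h2
            · exact hfgb j h2
            · rw [show j = d' + 1 by omega]
              exact hfgd
      have hfop : op f = op (f - g) + op g := by
        rw [← op_add, sub_add_cancel]
      rw [hfop]
      exact J.add_mem hfinal hgJ
  have hIJ : I ≤ J := by
    intro x hx
    have hxop : op (unop x) = x := op_unop x
    by_cases h0 : unop x = 0
    · have : x = 0 := by rw [← hxop, h0, op_zero]
      rw [this]
      exact J.zero_mem
    · obtain ⟨n, _, hb⟩ := exists_top (unop x) h0
      have := key n (unop x) (by rwa [hxop]) hb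
      rwa [hxop] at this
  exact Submodule.fg_def.mpr ⟨W, hWfin, le_antisymm hJI hIJ⟩

end RightHBT
end SkewPoly
end P5




open FreeAlgebra

/-- Generators of `F_q(N)`: `Sum.inl i` is `z_i` and `Sum.inr i` is `z_i^*`. -/
abbrev FqGen (N : ℕ) : Type := Fin N ⊕ Fin N

/-- The defining relations of `F_q(N)`. -/
inductive FqRel (N : ℕ) (q : ℂ) : FreeAlgebra ℂ (FqGen N) → FreeAlgebra ℂ (FqGen N) → Prop
  | zz (i j : Fin N) (h : i < j) :
      FqRel N q (ι ℂ (Sum.inl i) * ι ℂ (Sum.inl j))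
        (q⁻¹ • (ι ℂ (Sum.inl j) * ι ℂ (Sum.inl i)))
  | ss (i j : Fin N) (h : i < j) :
      FqRel N q (ι ℂ (Sum.inr i) * ι ℂ (Sum.inr j))
        (q • (ι ℂ (Sum.inr j) * ι ℂ (Sum.inr i)))
  | zs (i j : Fin N) (h : i ≠ j) :
      FqRel N q (ι ℂ (Sum.inl i) * ι ℂ (Sum.inr j))
        (q⁻¹ • (ι ℂ (Sum.inr j) * ι ℂ (Sum.inl i)))
  | heis (i : Fin N) :
      FqRel N q (ι ℂ (Sum.inl i) * ι ℂ (Sum.inr i) - ι ℂ (Sum.inr i) * ι ℂ (Sum.inl i))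
        ((q ^ 2 - 1) • ∑ k ∈ Finset.univ.filter (fun k : Fin N => i < k),
            ι ℂ (Sum.inl k) * ι ℂ (Sum.inr k))

/-- The algebra `F_q(N)`: the quotient of the free algebra by (the two-sided ideal
generated by) the defining relations. -/
abbrev Fq (N : ℕ) (q : ℂ) : Type := RingQuot (FqRel N q)

/-- The generator `z_i` of `F_q(N)`. -/
noncomputable def zGen (N : ℕ) (q : ℂ) (i : Fin N) : Fq N q :=
  RingQuot.mkAlgHom ℂ (FqRel N q) (ι ℂ (Sum.inl i))

/-- The generator `z_i^*` of `F_q(N)`. -/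
noncomputable def zsGen (N : ℕ) (q : ℂ) (i : Fin N) : Fq N q :=
  RingQuot.mkAlgHom ℂ (FqRel N q) (ι ℂ (Sum.inr i))



section P6
open FreeAlgebra

section RelAlg

variable {n : ℕ} {q : ℂ} {A : Type} [Ring A] [Algebra ℂ A]

/-- The `F_q` relations hold for a pair of families in `A`. -/
def RelHold (q : ℂ) (gz gzs : Fin n → A) : Prop :=
  ∀ u v, FqRel n q u v →
    (FreeAlgebra.lift ℂ (Sum.elim gz gzs) : FreeAlgebra ℂ (FqGen n) →ₐ[ℂ] A) u
      = FreeAlgebra.lift ℂ (Sum.elim gz gzs) v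

variable {gz gzs : Fin n → A} (hrel : RelHold q gz gzs)

/-- The sums `t_m = ∑_{k ≥ m} z_k z_k^*`. -/
noncomputable def tOf (gz gzs : Fin n → A) (m : ℕ) : A :=
  ∑ k ∈ Finset.univ.filter (fun k : Fin n => m ≤ (k : ℕ)), gz k * gzs k

include hrel

lemma rel_zz {i j : Fin n} (h : i < j) : gz i * gz j = q⁻¹ • (gz j * gz i) := by
  have := hrel _ _ (FqRel.zz i j h)
  simpa using this

lemma rel_ss {i j : Fin n} (h : i < j) : gzs i * gzs j = q • (gzs j * gzs i) := by
  have := hrel _ _ (FqRel.ss i j h)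
  simpa using this

lemma rel_zs {i j : Fin n} (h : i ≠ j) : gz i * gzs j = q⁻¹ • (gzs j * gz i) := by
  have := hrel _ _ (FqRel.zs i j h)
  simpa using this

lemma rel_heis (i : Fin n) :
    gz i * gzs i = gzs i * gz i + (q ^ 2 - 1) • tOf gz gzs ((i : ℕ) + 1) := by
  have h := hrel _ _ (FqRel.heis i)
  simp only [map_sub, map_mul, map_smul, map_sum, FreeAlgebra.lift_ι_apply, Sum.elim_inl,
    Sum.elim_inr] at h
  rw [sub_eq_iff_eq_add] at h
  rw [h, tOf]
  rw [show (Finset.univ.filter fun k : Fin n => (i : ℕ) + 1 ≤ (k : ℕ))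
      = Finset.univ.filter fun k : Fin n => i < k from
    Finset.filter_congr fun k _ => by rw [Fin.lt_def]; omega]
  ring_nf
  abel

variable (hq : q ≠ 0)
include hq

lemma rel_zz' {i j : Fin n} (h : i < j) : gz j * gz i = q • (gz i * gz j) := by
  rw [rel_zz hrel h, smul_smul, mul_inv_cancel₀ hq, one_smul]

lemma rel_ss' {i j : Fin n} (h : i < j) : gzs j * gzs i = q⁻¹ • (gzs i * gzs j) := by
  rw [rel_ss hrel h, smul_smul, inv_mul_cancel₀ hq, one_smul]

lemma rel_zs' {i j : Fin n} (h : i ≠ j) : gzs j * gz i = q • (gz i * gzs j) := by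
  rw [rel_zs hrel h, smul_smul, mul_inv_cancel₀ hq, one_smul]

lemma tw_zz_low {k j : Fin n} (h : j < k) :
    gz k * (gz j * gzs j) = (gz j * gzs j) * gz k := by
  calc gz k * (gz j * gzs j) = (gz k * gz j) * gzs j := by rw [mul_assoc]
    _ = (q • (gz j * gz k)) * gzs j := by rw [rel_zz' hrel hq h]
    _ = q • (gz j * (gz k * gzs j)) := by rw [smul_mul_assoc, mul_assoc]
    _ = q • (gz j * (q⁻¹ • (gzs j * gz k))) := by rw [rel_zs hrel (ne_of_gt h)]
    _ = (q * q⁻¹) • (gz j * (gzs j * gz k)) := by rw [mul_smul_comm, smul_smul]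
    _ = (gz j * gzs j) * gz k := by rw [mul_inv_cancel₀ hq, one_smul, mul_assoc]

omit hq in
lemma tw_zz_high {k j : Fin n} (h : k < j) :
    gz k * (gz j * gzs j) = (q⁻¹ * q⁻¹) • ((gz j * gzs j) * gz k) := by
  calc gz k * (gz j * gzs j) = (gz k * gz j) * gzs j := by rw [mul_assoc]
    _ = (q⁻¹ • (gz j * gz k)) * gzs j := by rw [rel_zz hrel h]
    _ = q⁻¹ • (gz j * (gz k * gzs j)) := by rw [smul_mul_assoc, mul_assoc]
    _ = q⁻¹ • (gz j * (q⁻¹ • (gzs j * gz k))) := by rw [rel_zs hrel (ne_of_lt h)]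
    _ = (q⁻¹ * q⁻¹) • (gz j * (gzs j * gz k)) := by rw [mul_smul_comm, smul_smul]
    _ = (q⁻¹ * q⁻¹) • ((gz j * gzs j) * gz k) := by rw [mul_assoc]

lemma tw_zs_low {k j : Fin n} (h : j < k) :
    gzs k * (gz j * gzs j) = (gz j * gzs j) * gzs k := by
  calc gzs k * (gz j * gzs j) = (gzs k * gz j) * gzs j := by rw [mul_assoc]
    _ = (q • (gz j * gzs k)) * gzs j := by rw [rel_zs' hrel hq (ne_of_lt h)]
    _ = q • (gz j * (gzs k * gzs j)) := by rw [smul_mul_assoc, mul_assoc]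
    _ = q • (gz j * (q⁻¹ • (gzs j * gzs k))) := by rw [rel_ss' hrel hq h]
    _ = (q * q⁻¹) • (gz j * (gzs j * gzs k)) := by rw [mul_smul_comm, smul_smul]
    _ = (gz j * gzs j) * gzs k := by rw [mul_inv_cancel₀ hq, one_smul, mul_assoc]

lemma tw_zs_high {k j : Fin n} (h : k < j) :
    gzs k * (gz j * gzs j) = (q * q) • ((gz j * gzs j) * gzs k) := by
  calc gzs k * (gz j * gzs j) = (gzs k * gz j) * gzs j := by rw [mul_assoc]
    _ = (q • (gz j * gzs k)) * gzs j := by rw [rel_zs' hrel hq (ne_of_gt h)]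
    _ = q • (gz j * (gzs k * gzs j)) := by rw [smul_mul_assoc, mul_assoc]
    _ = q • (gz j * (q • (gzs j * gzs k))) := by rw [rel_ss hrel h]
    _ = (q * q) • (gz j * (gzs j * gzs k)) := by rw [mul_smul_comm, smul_smul]
    _ = (q * q) • ((gz j * gzs j) * gzs k) := by rw [mul_assoc]

omit hrel hq in
lemma t_split (k : Fin n) :
    tOf gz gzs (k : ℕ) = gz k * gzs k + tOf gz gzs ((k : ℕ) + 1) := by
  rw [tOf, tOf]
  rw [show (Finset.univ.filter fun j : Fin n => (k : ℕ) ≤ (j : ℕ))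
      = insert k (Finset.univ.filter fun j : Fin n => (k : ℕ) + 1 ≤ (j : ℕ)) by
    ext j
    simp only [Finset.mem_filter, Finset.mem_insert, Finset.mem_univ, true_and]
    rw [Fin.ext_iff]
    omega]
  rw [Finset.sum_insert (by simp)]

lemma t_high (k : Fin n) (m : ℕ) (h : (k : ℕ) < m) :
    gz k * tOf gz gzs m = (q⁻¹ * q⁻¹) • (tOf gz gzs m * gz k) := by
  rw [tOf, Finset.mul_sum, Finset.sum_mul, Finset.smul_sum]
  apply Finset.sum_congr rfl
  intro j hj
  have hj' : m ≤ (j : ℕ) := (Finset.mem_filter.mp hj).2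
  exact tw_zz_high hrel (by rw [Fin.lt_def]; omega)

lemma ts_high (k : Fin n) (m : ℕ) (h : (k : ℕ) < m) :
    gzs k * tOf gz gzs m = (q * q) • (tOf gz gzs m * gzs k) := by
  rw [tOf, Finset.mul_sum, Finset.sum_mul, Finset.smul_sum]
  apply Finset.sum_congr rfl
  intro j hj
  have hj' : m ≤ (j : ℕ) := (Finset.mem_filter.mp hj).2
  exact tw_zs_high hrel hq (by rw [Fin.lt_def]; omega)

lemma t_core (k : Fin n) :
    gz k * tOf gz gzs (k : ℕ) = tOf gz gzs (k : ℕ) * gz k := by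
  rw [t_split, mul_add, add_mul]
  have h1 : gz k * (gz k * gzs k)
      = (gz k * gzs k) * gz k
        + ((q ^ 2 - 1) * (q⁻¹ * q⁻¹)) • (tOf gz gzs ((k : ℕ) + 1) * gz k) := by
    calc gz k * (gz k * gzs k)
        = gz k * (gzs k * gz k + (q ^ 2 - 1) • tOf gz gzs ((k : ℕ) + 1)) := by
          rw [← rel_heis hrel]
      _ = (gz k * gzs k) * gz k + (q ^ 2 - 1) • (gz k * tOf gz gzs ((k : ℕ) + 1)) := by
          rw [mul_add, mul_smul_comm, mul_assoc]
      _ = (gz k * gzs k) * gz k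
            + ((q ^ 2 - 1) * (q⁻¹ * q⁻¹)) • (tOf gz gzs ((k : ℕ) + 1) * gz k) := by
          rw [t_high hrel hq k ((k : ℕ) + 1) (by omega), smul_smul]
  rw [h1, t_high hrel hq k ((k : ℕ) + 1) (by omega)]
  have hs : ((q ^ 2 - 1) * (q⁻¹ * q⁻¹)) + (q⁻¹ * q⁻¹) = 1 := by
    field_simp
    ring
  rw [add_assoc, ← add_smul, hs, one_smul]

lemma ts_core (k : Fin n) :
    gzs k * tOf gz gzs (k : ℕ) = tOf gz gzs (k : ℕ) * gzs k := by
  rw [t_split, mul_add, add_mul]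
  have hz : gzs k * gz k = gz k * gzs k - (q ^ 2 - 1) • tOf gz gzs ((k : ℕ) + 1) := by
    rw [rel_heis hrel (i := k)]
    abel
  have h1 : gzs k * (gz k * gzs k)
      = (gz k * gzs k) * gzs k - (q ^ 2 - 1) • (tOf gz gzs ((k : ℕ) + 1) * gzs k) := by
    calc gzs k * (gz k * gzs k) = (gzs k * gz k) * gzs k := by rw [mul_assoc]
      _ = (gz k * gzs k - (q ^ 2 - 1) • tOf gz gzs ((k : ℕ) + 1)) * gzs k := by rw [hz]
      _ = (gz k * gzs k) * gzs k - (q ^ 2 - 1) • (tOf gz gzs ((k : ℕ) + 1) * gzs k) := by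
          rw [sub_mul, smul_mul_assoc]
  rw [h1, ts_high hrel hq k ((k : ℕ) + 1) (by omega)]
  have hs : (-(q ^ 2 - 1) + q * q : ℂ) = 1 := by ring
  rw [sub_eq_add_neg, ← neg_smul, add_assoc, ← add_smul, hs, one_smul]

lemma t_comm (k : Fin n) (m : ℕ) (h : m ≤ (k : ℕ)) :
    gz k * tOf gz gzs m = tOf gz gzs m * gz k := by
  have hsplit : tOf gz gzs m
      = (∑ j ∈ (Finset.univ.filter fun j : Fin n => m ≤ (j : ℕ)).filter
            (fun j : Fin n => (j : ℕ) < (k : ℕ)), gz j * gzs j) + tOf gz gzs (k : ℕ) := by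
    rw [tOf, tOf, ← Finset.sum_filter_add_sum_filter_not
      (Finset.univ.filter fun j : Fin n => m ≤ (j : ℕ)) (fun j : Fin n => (j : ℕ) < (k : ℕ))]
    congr 1
    apply Finset.sum_congr _ (fun _ _ => rfl)
    rw [Finset.filter_filter]
    apply Finset.filter_congr
    intro j _
    constructor
    · intro hh; omega
    · intro hh; omega
  rw [hsplit, mul_add, add_mul, t_core hrel hq k]
  congr 1
  rw [Finset.mul_sum, Finset.sum_mul]
  apply Finset.sum_congr rfl
  intro j hj
  have hjk : (j : ℕ) < (k : ℕ) := (Finset.mem_filter.mp hj).2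
  exact tw_zz_low hrel hq (by rwa [Fin.lt_def])

lemma ts_comm (k : Fin n) (m : ℕ) (h : m ≤ (k : ℕ)) :
    gzs k * tOf gz gzs m = tOf gz gzs m * gzs k := by
  have hsplit : tOf gz gzs m
      = (∑ j ∈ (Finset.univ.filter fun j : Fin n => m ≤ (j : ℕ)).filter
            (fun j : Fin n => (j : ℕ) < (k : ℕ)), gz j * gzs j) + tOf gz gzs (k : ℕ) := by
    rw [tOf, tOf, ← Finset.sum_filter_add_sum_filter_not
      (Finset.univ.filter fun j : Fin n => m ≤ (j : ℕ)) (fun j : Fin n => (j : ℕ) < (k : ℕ))]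
    congr 1
    apply Finset.sum_congr _ (fun _ _ => rfl)
    rw [Finset.filter_filter]
    apply Finset.filter_congr
    intro j _
    constructor
    · intro hh; omega
    · intro hh; omega
  rw [hsplit, mul_add, add_mul, ts_core hrel hq k]
  congr 1
  rw [Finset.mul_sum, Finset.sum_mul]
  apply Finset.sum_congr rfl
  intro j hj
  have hjk : (j : ℕ) < (k : ℕ) := (Finset.mem_filter.mp hj).2
  exact tw_zs_low hrel hq (by rwa [Fin.lt_def])

end RelAlg

noncomputable def qnat (c : ℂ) (m : ℕ) : ℂ := ∑ i ∈ Finset.range m, c ^ i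

@[simp] lemma qnat_zero (c : ℂ) : qnat c 0 = 0 := rfl

@[simp] lemma qnat_one (c : ℂ) : qnat c 1 = 1 := by simp [qnat]

lemma qnat_succ (c : ℂ) (m : ℕ) : qnat c (m + 1) = qnat c m + c ^ m := by
  rw [qnat, qnat, Finset.sum_range_succ]

lemma qnat_add (c : ℂ) (a b : ℕ) : qnat c (a + b) = qnat c a + c ^ a * qnat c b := by
  induction b with
  | zero => simp
  | succ b ih =>
      rw [Nat.add_succ, qnat_succ, ih, qnat_succ, pow_add]
      ring

lemma sum_filter_succ_lt {M : Type} [AddCommMonoid M] {n : ℕ} (i : Fin n) (F : Fin (n + 1) → M) :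
    ∑ k ∈ Finset.univ.filter (fun k : Fin (n + 1) => i.succ < k), F k
      = ∑ k ∈ Finset.univ.filter (fun k : Fin n => i < k), F k.succ := by
  rw [Finset.sum_filter, Finset.sum_filter, Fin.sum_univ_succ]
  simp [Fin.succ_lt_succ_iff]

lemma sum_zero_lt {M : Type} [AddCommMonoid M] {n : ℕ} (F : Fin (n + 1) → M) :
    ∑ k ∈ Finset.univ.filter (fun k : Fin (n + 1) => 0 < k), F k = ∑ k : Fin n, F k.succ := by
  rw [Finset.sum_filter, Fin.sum_univ_succ]
  simp [Fin.succ_pos]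

end P6

section P7
namespace SkewPoly
variable {R : Type} [Ring R] [Algebra ℂ R] {σ : R ≃ₐ[ℂ] R} {δ : SkewDer R σ}

lemma lmul_smul_left (c : ℂ) (r : R) (f : SkewPoly R σ δ) :
    lmul (c • r) f = c • lmul r f := by
  apply ext
  intro j
  simp [smul_mul_assoc]

section Scale
variable (u : R ≃ₐ[ℂ] R) (c : ℂ)

def scaleFun (f : SkewPoly R σ δ) : SkewPoly R σ δ :=
  (show ℕ →₀ R from f).sum fun n r => mono n (c ^ n • u r)

lemma scaleFun_mono (n : ℕ) (r : R) :
    scaleFun u c (mono n r : SkewPoly R σ δ) = mono n (c ^ n • u r) :=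
  Finsupp.sum_single_index (by simp)

lemma scaleFun_add (f g : SkewPoly R σ δ) :
    scaleFun u c (f + g) = scaleFun u c f + scaleFun u c g :=
  Finsupp.sum_add_index (by simp) (by intro a _ r s; rw [map_add, smul_add, mono_add])

lemma scaleFun_zero : scaleFun u c (0 : SkewPoly R σ δ) = 0 := Finsupp.sum_zero_index

lemma coeff_scaleFun (f : SkewPoly R σ δ) (j : ℕ) :
    coeff (scaleFun u c f) j = c ^ j • u (coeff f j) := by
  induction f using induction_on with
  | h0 =>
      rw [scaleFun_zero]
      simp
  | hadd a b ha hb => rw [scaleFun_add, coeff_add, ha, hb, coeff_add, map_add, smul_add]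
  | hmono n r =>
      rw [scaleFun_mono, coeff_mono, coeff_mono]
      by_cases h : n = j
      · subst h; simp
      · simp [h]

lemma scaleFun_smul (a : ℂ) (f : SkewPoly R σ δ) :
    scaleFun u c (a • f) = a • scaleFun u c f := by
  apply ext
  intro j
  rw [coeff_scaleFun, coeff_smul, coeff_smul, coeff_scaleFun, map_smul, smul_comm]

variable (hσc : ∀ r, u (σ r) = σ (u r)) (hδc : ∀ r, u (δ.lin r) = c • δ.lin (u r))

include hσc hδc in
lemma scaleFun_T (f : SkewPoly R σ δ) : scaleFun u c (T f) = c • T (scaleFun u c f) := by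
  apply ext
  intro j
  cases j with
  | zero =>
      rw [coeff_scaleFun, coeff_T_zero, coeff_smul, coeff_T_zero, coeff_scaleFun, pow_zero,
        one_smul, one_smul, hδc]
  | succ j' =>
      rw [coeff_scaleFun, coeff_T_succ, coeff_smul, coeff_T_succ, coeff_scaleFun,
        coeff_scaleFun, map_add, hσc, hδc, map_smul, map_smul]
      module

lemma scaleFun_lmul (r : R) (g : SkewPoly R σ δ) :
    scaleFun u c (lmul r g) = lmul (u r) (scaleFun u c g) := by
  apply ext
  intro j
  rw [coeff_scaleFun, coeff_lmul, coeff_lmul, coeff_scaleFun, map_mul, mul_smul_comm]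

include hσc hδc in
lemma scaleFun_mul (f g : SkewPoly R σ δ) :
    scaleFun u c (f * g) = scaleFun u c f * scaleFun u c g := by
  induction f using induction_on with
  | h0 => rw [zero_mul', scaleFun_zero, zero_mul']
  | hadd a b ha hb => rw [add_mul', scaleFun_add, scaleFun_add, ha, hb, add_mul']
  | hmono n r =>
      have hT : ∀ g : SkewPoly R σ δ,
          scaleFun u c ((T ^ n) g) = c ^ n • (T ^ n) (scaleFun u c g) := by
        induction n with
        | zero => intro g; rw [pow_zero, pow_zero, one_smul]; rfl
        | succ n ih =>
            intro g
            rw [pow_succ, Module.End.mul_apply, ih (T g), scaleFun_T u c hσc hδc, map_smul,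
              pow_succ, Module.End.mul_apply, smul_smul]
      rw [mono_mul, scaleFun_lmul, hT, scaleFun_mono, mono_mul, lmul_smul_left, map_smul]

include hσc hδc in
lemma scaleFun_one : scaleFun u c (1 : SkewPoly R σ δ) = 1 := by
  rw [one_def, scaleFun_mono, pow_zero, one_smul, map_one]

/-- Coefficientwise scaling `∑ rₙ Xⁿ ↦ ∑ cⁿ u(rₙ) Xⁿ` as an algebra automorphism. -/
noncomputable def scaleEquiv (hc : c ≠ 0) : SkewPoly R σ δ ≃ₐ[ℂ] SkewPoly R σ δ where
  toFun := scaleFun u c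
  invFun := scaleFun u.symm c⁻¹
  left_inv := by
    intro f
    apply ext
    intro j
    rw [coeff_scaleFun, coeff_scaleFun, map_smul, AlgEquiv.symm_apply_apply, smul_smul,
      inv_pow, inv_mul_cancel₀ (pow_ne_zero j hc), one_smul]
  right_inv := by
    intro f
    apply ext
    intro j
    rw [coeff_scaleFun, coeff_scaleFun, map_smul, AlgEquiv.apply_symm_apply, smul_smul,
      inv_pow, mul_inv_cancel₀ (pow_ne_zero j hc), one_smul]
  map_mul' := scaleFun_mul u c hσc hδc
  map_add' := scaleFun_add u c
  commutes' := by
    intro a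
    show scaleFun u c (algebraMap ℂ _ a) = algebraMap ℂ _ a
    rw [Algebra.algebraMap_eq_smul_one, scaleFun_smul, scaleFun_one u c hσc hδc]

lemma scaleEquiv_apply (hc : c ≠ 0) (f : SkewPoly R σ δ) :
    scaleEquiv u c hσc hδc hc f = scaleFun u c f := rfl

end Scale

/-- The zero derivation. -/
def zeroDer (σ : R ≃ₐ[ℂ] R) : SkewDer R σ := ⟨0, by simp⟩

lemma Tpow_mono_zeroDer (k m : ℕ) (s : R) :
    (T ^ k) (mono m s : SkewPoly R σ (zeroDer σ)) = mono (m + k) ((σ ^ k) s) := by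
  induction k with
  | zero => rfl
  | succ k ih =>
      rw [pow_succ', Module.End.mul_apply, ih, T_mono, show (zeroDer σ).lin = 0 from rfl]
      rw [sigma_pow_succ_apply]
      simp
      rfl

lemma mono_mul_mono_zeroDer (n m : ℕ) (r s : R) :
    (mono n r : SkewPoly R σ (zeroDer σ)) * mono m s = mono (n + m) (r * (σ ^ n) s) := by
  rw [mono_mul, Tpow_mono_zeroDer, lmul_mono, Nat.add_comm m n]

end SkewPoly
end P7

section P7B
namespace SkewPoly
variable {A : Type} [Ring A] [Algebra ℂ A] (q : ℂ) (α : A ≃ₐ[ℂ] A) (w : A)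

lemma sigma_pow_succ_apply' {R : Type} [Ring R] [Algebra ℂ R] (σ : R ≃ₐ[ℂ] R) (k : ℕ) (y : R) :
    (σ ^ (k + 1)) y = (σ ^ k) (σ y) := by
  rw [pow_succ]
  rfl

lemma beta_pow (k : ℕ) (s : A) : α.symm ((α ^ (k + 1)) s) = (α ^ k) s := by
  rw [sigma_pow_succ_apply, AlgEquiv.symm_apply_apply]

lemma pow_apply_symm (k : ℕ) (s : A) : (α ^ (k + 1)) (α.symm s) = (α ^ k) s := by
  rw [sigma_pow_succ_apply', AlgEquiv.apply_symm_apply]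

/-- The "coefficientwise `α⁻¹`" automorphism of `A[X; α]` (fixing `X`). -/
noncomputable def flipEquiv : SkewPoly A α (zeroDer α) ≃ₐ[ℂ] SkewPoly A α (zeroDer α) :=
  scaleEquiv α.symm 1 (fun r => by simp) (fun r => by simp [zeroDer]) one_ne_zero

lemma flipEquiv_mono (n : ℕ) (r : A) :
    flipEquiv α (mono n r) = mono n (α.symm r) := by
  rw [flipEquiv, scaleEquiv_apply, scaleFun_mono, one_pow, one_smul]

variable (hαw : α w = (q * q) • w)

include hαw in
lemma pow_w (k : ℕ) : (α ^ k) w = ((q * q) ^ k) • w := by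
  induction k with
  | zero => simp
  | succ k ih =>
      rw [sigma_pow_succ_apply, ih, map_smul, hαw, smul_smul, pow_succ]

/-- The σ-derivation `δ(∑ rₙ Xⁿ) = ∑ [n]_{q²} w α⁻¹(rₙ) X^{n-1}` on `A[X; α]`. -/
noncomputable def heisDerLin : SkewPoly A α (zeroDer α) →ₗ[ℂ] SkewPoly A α (zeroDer α) :=
  Finsupp.lsum ℂ fun n => Nat.casesOn n 0 fun m =>
    qnat (q * q) (m + 1) •
      ((Finsupp.lsingle m : A →ₗ[ℂ] (ℕ →₀ A)).comp
        ((LinearMap.mulLeft ℂ w).comp α.symm.toLinearMap) :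
        A →ₗ[ℂ] SkewPoly A α (zeroDer α))

lemma heisDerLin_mono_zero (r : A) : heisDerLin q α w (mono 0 r) = 0 := by
  show Finsupp.lsum ℂ _ (Finsupp.single 0 r) = 0
  rw [Finsupp.lsum_single]
  rfl

lemma heisDerLin_mono_succ (m : ℕ) (r : A) :
    heisDerLin q α w (mono (m + 1) r) = qnat (q * q) (m + 1) • mono m (w * α.symm r) := by
  show Finsupp.lsum ℂ _ (Finsupp.single (m + 1) r) = _
  rw [Finsupp.lsum_single]
  rfl

variable (hw : ∀ x : A, w * x = x * w)

include hw hαw in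
lemma heisDer_leibniz (a b : SkewPoly A α (zeroDer α)) :
    heisDerLin q α w (a * b)
      = flipEquiv α a * heisDerLin q α w b + heisDerLin q α w a * b := by
  induction a using induction_on with
  | h0 => simp only [zero_mul', map_zero, zero_mul, zero_add, add_zero]
  | hadd f g hf hg =>
      rw [add_mul', map_add, hf, hg, map_add, map_add, add_mul, add_mul']
      abel
  | hmono n r =>
      induction b using induction_on with
      | h0 => simp only [mul_zero', map_zero, mul_zero, zero_add, add_zero]
      | hadd f g hf hg =>
          rw [mul_add', map_add, hf, hg, map_add, mul_add, mul_add']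
          abel
      | hmono m s =>
          rw [mono_mul_mono_zeroDer, flipEquiv_mono]
          cases n with
          | zero =>
              cases m with
              | zero =>
                  simp only [Nat.add_zero, Nat.zero_add, heisDerLin_mono_zero, zero_mul,
                    mul_zero, zero_add, add_zero]
              | succ m' =>
                  rw [show (0 + (m' + 1)) = m' + 1 by omega, heisDerLin_mono_succ,
                    heisDerLin_mono_succ, heisDerLin_mono_zero, zero_mul, add_zero,
                    mul_smul_comm, mono_mul_mono_zeroDer, pow_zero]
                  congr 1
                  simp only [AlgEquiv.one_apply, Nat.zero_add]
                  rw [map_mul, ← mul_assoc, hw (α.symm r), mul_assoc]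
          | succ n' =>
              cases m with
              | zero =>
                  rw [show (n' + 1 + 0) = n' + 1 by omega, heisDerLin_mono_succ,
                    heisDerLin_mono_succ, heisDerLin_mono_zero, mul_zero, zero_add,
                    smul_mul_assoc, mono_mul_mono_zeroDer]
                  congr 1
                  rw [map_mul, beta_pow, mul_assoc]
                  simp only [Nat.add_zero]
              | succ m' =>
                  rw [show (n' + 1 + (m' + 1)) = (n' + 1 + m') + 1 by omega,
                    heisDerLin_mono_succ, heisDerLin_mono_succ, heisDerLin_mono_succ,
                    mul_smul_comm, smul_mul_assoc, mono_mul_mono_zeroDer,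
                    mono_mul_mono_zeroDer]
                  have e1 : α.symm (r * (α ^ (n' + 1)) s) = α.symm r * (α ^ n') s := by
                    rw [map_mul, beta_pow]
                  have e2 : (α ^ (n' + 1)) (w * α.symm s)
                      = ((q * q) ^ (n' + 1)) • (w * (α ^ n') s) := by
                    rw [map_mul, pow_w q α w hαw, pow_apply_symm, smul_mul_assoc]
                  rw [e1, e2, mul_smul_comm]
                  rw [show n' + (m' + 1) = n' + 1 + m' by omega]
                  rw [show w * α.symm r * (α ^ n') s = w * (α.symm r * (α ^ n') s) by
                    rw [mul_assoc]]
                  rw [show α.symm r * (w * (α ^ n') s) = w * (α.symm r * (α ^ n') s) by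
                    rw [← mul_assoc, ← hw (α.symm r), mul_assoc]]
                  rw [← smul_mono, smul_smul, ← add_smul]
                  congr 1
                  rw [show n' + 1 + m' + 1 = (n' + 1) + (m' + 1) by omega, qnat_add]
                  ring
          
/-- The Heisenberg σ-derivation. -/
noncomputable def heisDer (hαw : α w = (q * q) • w) (hw : ∀ x : A, w * x = x * w) :
    SkewDer (SkewPoly A α (zeroDer α)) (flipEquiv α) :=
  ⟨heisDerLin q α w, heisDer_leibniz q α w hαw hw⟩

end SkewPoly
end P7B

section P8
open FreeAlgebra

lemma fq_relHold (n : ℕ) (q : ℂ) : RelHold q (zGen n q) (zsGen n q) := by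
  intro u v h
  have hl : (FreeAlgebra.lift ℂ (Sum.elim (zGen n q) (zsGen n q)) :
      FreeAlgebra ℂ (FqGen n) →ₐ[ℂ] Fq n q) = RingQuot.mkAlgHom ℂ (FqRel n q) := by
    apply FreeAlgebra.hom_ext
    funext x
    cases x with
    | inl i => simp [zGen]
    | inr i => simp [zsGen]
  rw [hl]
  exact RingQuot.mkAlgHom_rel ℂ h

lemma relHold_succ {n : ℕ} {q : ℂ} {A : Type} [Ring A] [Algebra ℂ A]
    {gz gzs : Fin (n + 1) → A} (h : RelHold q gz gzs) :
    RelHold q (fun j : Fin n => gz j.succ) (fun j : Fin n => gzs j.succ) := by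
  intro u v hrel
  cases hrel with
  | zz i j hij =>
      simp only [map_mul, map_smul, FreeAlgebra.lift_ι_apply, Sum.elim_inl]
      exact rel_zz h (by simpa [Fin.succ_lt_succ_iff] using hij)
  | ss i j hij =>
      simp only [map_mul, map_smul, FreeAlgebra.lift_ι_apply, Sum.elim_inr]
      exact rel_ss h (by simpa [Fin.succ_lt_succ_iff] using hij)
  | zs i j hij =>
      simp only [map_mul, map_smul, FreeAlgebra.lift_ι_apply, Sum.elim_inl, Sum.elim_inr]
      exact rel_zs h (by simpa [Fin.succ_inj] using hij)
  | heis i =>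
      simp only [map_sub, map_mul, map_smul, map_sum, FreeAlgebra.lift_ι_apply, Sum.elim_inl,
        Sum.elim_inr]
      have h0 := h _ _ (FqRel.heis i.succ)
      simp only [map_sub, map_mul, map_smul, map_sum, FreeAlgebra.lift_ι_apply, Sum.elim_inl,
        Sum.elim_inr] at h0
      rw [h0, sum_filter_succ_lt]

/-- The inclusion `F_q(n) → F_q(n+1)` sending generator `j` to `j+1`. -/
noncomputable def incFq (n : ℕ) (q : ℂ) : Fq n q →ₐ[ℂ] Fq (n + 1) q :=
  RingQuot.liftAlgHom ℂ
    ⟨FreeAlgebra.lift ℂ (Sum.elim (fun j : Fin n => zGen (n + 1) q j.succ)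
        (fun j : Fin n => zsGen (n + 1) q j.succ)),
      fun {u v} h => relHold_succ (fq_relHold (n + 1) q) u v h⟩

@[simp] lemma incFq_z (n : ℕ) (q : ℂ) (j : Fin n) :
    incFq n q (zGen n q j) = zGen (n + 1) q j.succ := by
  rw [incFq, zGen, RingQuot.liftAlgHom_mkAlgHom_apply]
  simp

@[simp] lemma incFq_zs (n : ℕ) (q : ℂ) (j : Fin n) :
    incFq n q (zsGen n q j) = zsGen (n + 1) q j.succ := by
  rw [incFq, zsGen, RingQuot.liftAlgHom_mkAlgHom_apply]
  simp

/-- The data carried by one stage of the tower. -/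
structure StageData (q : ℂ) (n : ℕ) (A : Type) [Ring A] [Algebra ℂ A] : Type where
  gz : Fin n → A
  gzs : Fin n → A
  dom : IsDomain A
  noeth : IsNoetherianRing A
  noethop : IsNoetherianRing Aᵐᵒᵖ
  α : A ≃ₐ[ℂ] A
  hαz : ∀ j, α (gz j) = q • gz j
  hαzs : ∀ j, α (gzs j) = q • gzs j
  rel : RelHold q gz gzs
  gen : Algebra.adjoin ℂ (Set.range gz ∪ Set.range gzs) = ⊤
  back : A →ₐ[ℂ] Fq n q
  hbz : ∀ j, back (gz j) = zGen n q j
  hbzs : ∀ j, back (gzs j) = zsGen n q j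

structure Stage (q : ℂ) (n : ℕ) : Type 1 where
  A : Type
  ring : Ring A
  alg : @Algebra ℂ A inferInstance ring.toSemiring
  data : @StageData q n A ring alg

noncomputable def stageZero (q : ℂ) : Stage q 0 where
  A := ℂ
  ring := inferInstance
  alg := inferInstance
  data :=
    { gz := Fin.elim0
      gzs := Fin.elim0
      dom := inferInstance
      noeth := inferInstance
      noethop := isNoetherianRing_of_ringEquiv ℂ (RingEquiv.toOpposite ℂ)
      α := AlgEquiv.refl
      hαz := fun j => j.elim0
      hαzs := fun j => j.elim0
      rel := by
        intro u v h
        cases h with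
        | zz i j hij => exact i.elim0
        | ss i j hij => exact i.elim0
        | zs i j hij => exact i.elim0
        | heis i => exact i.elim0
      gen := by
        rw [eq_top_iff]
        intro x _
        have := Subalgebra.algebraMap_mem
          (Algebra.adjoin ℂ (Set.range (Fin.elim0 : Fin 0 → ℂ) ∪ Set.range Fin.elim0)) x
        rwa [Algebra.algebraMap_self_apply] at this
      back := Algebra.ofId ℂ (Fq 0 q)
      hbz := fun j => j.elim0
      hbzs := fun j => j.elim0 }

end P8

section P9
open SkewPoly

set_option maxHeartbeats 1000000 in
noncomputable def stageStep (q : ℂ) (hq : q ≠ 0) {n : ℕ} (S : Stage q n) : Stage q (n + 1) :=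
  letI := S.ring
  letI := S.alg
  letI hdom := S.data.dom
  letI hnoe := S.data.noeth
  letI hnoeop := S.data.noethop
  let D := S.data
  let α₀ := D.α
  let w : S.A := (q ^ 2 - 1) • tOf D.gz D.gzs 0
  have htall : ∀ x : S.A, tOf D.gz D.gzs 0 * x = x * tOf D.gz D.gzs 0 := by
    intro x
    have hx : x ∈ Algebra.adjoin ℂ (Set.range D.gz ∪ Set.range D.gzs) := by
      rw [D.gen]; trivial
    induction hx using Algebra.adjoin_induction with
    | mem y hy =>
        rcases hy with ⟨j, rfl⟩ | ⟨j, rfl⟩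
        · exact (t_comm D.rel hq j 0 (Nat.zero_le _)).symm
        · exact (ts_comm D.rel hq j 0 (Nat.zero_le _)).symm
    | algebraMap c => rw [Algebra.commutes]
    | add y z hy hz hy' hz' => rw [mul_add, add_mul, hy', hz']
    | mul y z hy hz hy' hz' => rw [← mul_assoc, hy', mul_assoc, hz', mul_assoc]
  have hw : ∀ x : S.A, w * x = x * w := by
    intro x
    show ((q ^ 2 - 1) • tOf D.gz D.gzs 0) * x = x * ((q ^ 2 - 1) • tOf D.gz D.gzs 0)
    rw [smul_mul_assoc, htall, mul_smul_comm]
  have hαw : α₀ w = (q * q) • w := by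
    show α₀ ((q ^ 2 - 1) • tOf D.gz D.gzs 0) = (q * q) • ((q ^ 2 - 1) • tOf D.gz D.gzs 0)
    rw [map_smul, smul_comm]
    congr 1
    rw [tOf, map_sum, Finset.smul_sum]
    apply Finset.sum_congr rfl
    intro j _
    rw [map_mul, D.hαz, D.hαzs, smul_mul_assoc, mul_smul_comm, smul_smul]
  let A₁ := SkewPoly S.A α₀ (SkewPoly.zeroDer α₀)
  let σ₂ : A₁ ≃ₐ[ℂ] A₁ := SkewPoly.flipEquiv α₀
  let d : SkewDer A₁ σ₂ := SkewPoly.heisDer q α₀ w hαw hw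
  let A' := SkewPoly A₁ σ₂ d
  let ι₀ : S.A →ₐ[ℂ] A₁ := SkewPoly.ι
  let ι₁ : A₁ →ₐ[ℂ] A' := SkewPoly.ι
  let gz' : Fin (n + 1) → A' := Fin.cases SkewPoly.X (fun j => ι₁ (ι₀ (D.gz j)))
  let gzs' : Fin (n + 1) → A' := Fin.cases (ι₁ SkewPoly.X) (fun j => ι₁ (ι₀ (D.gzs j)))
  let α₁ : A₁ ≃ₐ[ℂ] A₁ :=
    SkewPoly.scaleEquiv α₀ q (fun r => rfl) (fun r => by simp [SkewPoly.zeroDer]) hq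
  have hσ' : ∀ f : A₁, α₁ (σ₂ f) = σ₂ (α₁ f) := by
    intro f
    apply SkewPoly.ext
    intro j
    show coeff (scaleFun α₀ q (scaleFun α₀.symm 1 f)) j
        = coeff (scaleFun α₀.symm 1 (scaleFun α₀ q f)) j
    rw [coeff_scaleFun, coeff_scaleFun, coeff_scaleFun, coeff_scaleFun, one_pow, one_smul,
      map_smul, one_smul, AlgEquiv.apply_symm_apply, AlgEquiv.symm_apply_apply]
  have hδ' : ∀ f : A₁, α₁ (d.lin f) = q • d.lin (α₁ f) := by
    intro f
    induction f using SkewPoly.induction_on with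
    | h0 => rw [map_zero, map_zero, map_zero, smul_zero]
    | hadd a b ha hb => rw [map_add, map_add, ha, hb, map_add, map_add, smul_add]
    | hmono m r =>
        show α₁ (heisDerLin q α₀ w (mono m r)) = q • heisDerLin q α₀ w (α₁ (mono m r))
        cases m with
        | zero =>
            rw [heisDerLin_mono_zero, map_zero,
              show α₁ (mono 0 r) = mono 0 ((q : ℂ) ^ 0 • α₀ r) from scaleFun_mono α₀ q 0 r,
              pow_zero, one_smul, heisDerLin_mono_zero, smul_zero]
        | succ m' =>
            rw [heisDerLin_mono_succ,
              show α₁ ((qnat (q*q) (m'+1)) • mono m' (w * α₀.symm r))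
                  = (qnat (q*q) (m'+1)) • α₁ (mono m' (w * α₀.symm r)) from map_smul _ _ _,
              show α₁ (mono m' (w * α₀.symm r)) = mono m' ((q : ℂ) ^ m' • α₀ (w * α₀.symm r))
                from scaleFun_mono α₀ q m' _,
              show α₁ (mono (m' + 1) r) = mono (m' + 1) ((q : ℂ) ^ (m' + 1) • α₀ r)
                from scaleFun_mono α₀ q (m' + 1) r,
              ← smul_mono, heisDerLin_mono_succ, map_mul, hαw, AlgEquiv.apply_symm_apply]
            rw [map_smul, AlgEquiv.symm_apply_apply, mul_smul_comm, smul_mul_assoc,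
              ← smul_mono, ← smul_mono, smul_smul, smul_smul, smul_smul, smul_smul]
            congr 1
            ring
  let α' : A' ≃ₐ[ℂ] A' := SkewPoly.scaleEquiv α₁ q hσ' hδ' hq
  have hα'X : α' (SkewPoly.X : A') = q • SkewPoly.X := by
    show scaleFun α₁ q (mono 1 1) = q • (mono 1 1 : A')
    rw [scaleFun_mono, map_one, pow_one, smul_mono]
  have hα'ι : ∀ f : A₁, α' (ι₁ f) = ι₁ (α₁ f) := by
    intro f
    show scaleFun α₁ q (mono 0 f) = (mono 0 (α₁ f) : A')
    rw [scaleFun_mono, pow_zero, one_smul]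
  have hα₁ι : ∀ x : S.A, α₁ (ι₀ x) = ι₀ (α₀ x) := by
    intro x
    show scaleFun α₀ q (mono 0 x) = (mono 0 (α₀ x) : A₁)
    rw [scaleFun_mono, pow_zero, one_smul]
  have hα₁X : α₁ (SkewPoly.X : A₁) = q • SkewPoly.X := by
    show scaleFun α₀ q (mono 1 1) = q • (mono 1 1 : A₁)
    rw [scaleFun_mono, map_one, pow_one, smul_mono]
  have hβz : ∀ j, α₀.symm (D.gz j) = q⁻¹ • D.gz j := by
    intro j
    have h2 : α₀.symm (q • D.gz j) = D.gz j := by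
      rw [← D.hαz j, AlgEquiv.symm_apply_apply]
    rw [map_smul] at h2
    calc α₀.symm (D.gz j) = q⁻¹ • (q • α₀.symm (D.gz j)) := by
          rw [smul_smul, inv_mul_cancel₀ hq, one_smul]
      _ = q⁻¹ • D.gz j := by rw [h2]
  have hβzs : ∀ j, α₀.symm (D.gzs j) = q⁻¹ • D.gzs j := by
    intro j
    have h2 : α₀.symm (q • D.gzs j) = D.gzs j := by
      rw [← D.hαzs j, AlgEquiv.symm_apply_apply]
    rw [map_smul] at h2
    calc α₀.symm (D.gzs j) = q⁻¹ • (q • α₀.symm (D.gzs j)) := by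
          rw [smul_smul, inv_mul_cancel₀ hq, one_smul]
      _ = q⁻¹ • D.gzs j := by rw [h2]
  have hσ₂ι : ∀ x : S.A, σ₂ (ι₀ x) = ι₀ (α₀.symm x) := by
    intro x
    show flipEquiv α₀ (mono 0 x) = (mono 0 (α₀.symm x) : A₁)
    rw [flipEquiv_mono]
  have hσ₂X : σ₂ (SkewPoly.X : A₁) = SkewPoly.X := by
    show flipEquiv α₀ (mono 1 1) = (mono 1 1 : A₁)
    rw [flipEquiv_mono, map_one]
  have hd0 : ∀ x : S.A, d.lin (ι₀ x) = 0 := fun x => heisDerLin_mono_zero q α₀ w x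
  have hdX : d.lin (SkewPoly.X : A₁) = ι₀ w := by
    show heisDerLin q α₀ w (mono (0 + 1) 1) = (mono 0 w : A₁)
    rw [heisDerLin_mono_succ, qnat_one, one_smul, map_one, mul_one]
  have hXι : ∀ f : A₁, (SkewPoly.X : A') * ι₁ f = ι₁ (σ₂ f) * SkewPoly.X + ι₁ (d.lin f) :=
    fun f => SkewPoly.X_mul_ι f
  have hι₁X : ∀ f : A₁, ι₁ f * (SkewPoly.X : A') = SkewPoly.mono 1 f := by
    intro f
    show (mono 0 f : A') * mono 1 1 = mono 1 f
    rw [mono_mul, pow_zero, show ((1 : A' →ₗ[ℂ] A') (mono 1 1)) = mono 1 1 from rfl,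
      lmul_mono, mul_one]
  have hι₀X : ∀ x : S.A, ι₀ x * (SkewPoly.X : A₁) = SkewPoly.mono 1 x := by
    intro x
    show (mono 0 x : A₁) * mono 1 1 = mono 1 x
    rw [mono_mul, pow_zero, show ((1 : A₁ →ₗ[ℂ] A₁) (mono 1 1)) = mono 1 1 from rfl,
      lmul_mono, mul_one]
  have hXι₀ : ∀ x : S.A, (SkewPoly.X : A₁) * ι₀ x = SkewPoly.mono 1 (α₀ x) := by
    intro x
    show (SkewPoly.X : A₁) * mono 0 x = mono 1 (α₀ x)
    rw [X_mul, T_mono, show (zeroDer α₀).lin x = 0 from rfl, mono_zero, add_zero]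
  have htOf0 : tOf D.gz D.gzs 0 = ∑ k, D.gz k * D.gzs k := by
    rw [tOf]
    congr 1
    apply Finset.filter_true_of_mem
    intro x _
    exact Nat.zero_le _
  have hrel' : RelHold q gz' gzs' := by
    intro u v h
    cases h with
    | zz i j hij =>
        simp only [map_mul, map_smul, FreeAlgebra.lift_ι_apply, Sum.elim_inl]
        rcases Fin.eq_zero_or_eq_succ j with rfl | ⟨j', rfl⟩
        · exact absurd hij (Fin.not_lt_zero i)
        rcases Fin.eq_zero_or_eq_succ i with rfl | ⟨i', rfl⟩
        · show SkewPoly.X * (ι₁ (ι₀ (D.gz j'))) = q⁻¹ • (ι₁ (ι₀ (D.gz j')) * SkewPoly.X)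
          rw [hXι, hσ₂ι, hd0, map_zero, add_zero, hβz, map_smul, map_smul, smul_mul_assoc]
        · show ι₁ (ι₀ (D.gz i')) * ι₁ (ι₀ (D.gz j')) = q⁻¹ • (ι₁ (ι₀ (D.gz j')) * ι₁ (ι₀ (D.gz i')))
          rw [← map_mul, ← map_mul, ← map_mul, ← map_mul,
            rel_zz D.rel (Fin.succ_lt_succ_iff.mp hij), map_smul, map_smul]
    | ss i j hij =>
        simp only [map_mul, map_smul, FreeAlgebra.lift_ι_apply, Sum.elim_inr]
        rcases Fin.eq_zero_or_eq_succ j with rfl | ⟨j', rfl⟩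
        · exact absurd hij (Fin.not_lt_zero i)
        rcases Fin.eq_zero_or_eq_succ i with rfl | ⟨i', rfl⟩
        · show ι₁ SkewPoly.X * (ι₁ (ι₀ (D.gzs j'))) = q • (ι₁ (ι₀ (D.gzs j')) * ι₁ SkewPoly.X)
          rw [← map_mul, hXι₀, ← map_mul, hι₀X, D.hαzs, ← smul_mono, map_smul]
        · show ι₁ (ι₀ (D.gzs i')) * ι₁ (ι₀ (D.gzs j'))
              = q • (ι₁ (ι₀ (D.gzs j')) * ι₁ (ι₀ (D.gzs i')))
          rw [← map_mul, ← map_mul, ← map_mul, ← map_mul,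
            rel_ss D.rel (Fin.succ_lt_succ_iff.mp hij), map_smul, map_smul]
    | zs i j hij =>
        simp only [map_mul, map_smul, FreeAlgebra.lift_ι_apply, Sum.elim_inl, Sum.elim_inr]
        rcases Fin.eq_zero_or_eq_succ i with rfl | ⟨i', rfl⟩
        · rcases Fin.eq_zero_or_eq_succ j with rfl | ⟨j', rfl⟩
          · exact absurd rfl hij
          · show SkewPoly.X * (ι₁ (ι₀ (D.gzs j'))) = q⁻¹ • (ι₁ (ι₀ (D.gzs j')) * SkewPoly.X)
            rw [hXι, hσ₂ι, hd0, map_zero, add_zero, hβzs, map_smul, map_smul, smul_mul_assoc]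
        · rcases Fin.eq_zero_or_eq_succ j with rfl | ⟨j', rfl⟩
          · show ι₁ (ι₀ (D.gz i')) * ι₁ SkewPoly.X = q⁻¹ • (ι₁ SkewPoly.X * ι₁ (ι₀ (D.gz i')))
            rw [← map_mul, hι₀X, ← map_mul, hXι₀, D.hαz, ← smul_mono, map_smul, smul_smul,
              inv_mul_cancel₀ hq, one_smul]
          · show ι₁ (ι₀ (D.gz i')) * ι₁ (ι₀ (D.gzs j'))
                = q⁻¹ • (ι₁ (ι₀ (D.gzs j')) * ι₁ (ι₀ (D.gz i')))
            rw [← map_mul, ← map_mul, ← map_mul, ← map_mul,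
              rel_zs D.rel (fun e => hij (by rw [e])), map_smul, map_smul]
    | heis i =>
        simp only [map_sub, map_mul, map_smul, map_sum, FreeAlgebra.lift_ι_apply, Sum.elim_inl,
          Sum.elim_inr]
        rcases Fin.eq_zero_or_eq_succ i with rfl | ⟨i', rfl⟩
        · rw [sum_zero_lt]
          show SkewPoly.X * ι₁ SkewPoly.X - ι₁ SkewPoly.X * SkewPoly.X
              = (q ^ 2 - 1) • ∑ k : Fin n, ι₁ (ι₀ (D.gz k)) * ι₁ (ι₀ (D.gzs k))
          rw [hXι, hσ₂X, hdX, add_sub_cancel_left]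
          have : (∑ k : Fin n, ι₁ (ι₀ (D.gz k)) * ι₁ (ι₀ (D.gzs k)))
              = ι₁ (ι₀ (∑ k, D.gz k * D.gzs k)) := by
            rw [map_sum, map_sum]
            apply Finset.sum_congr rfl
            intro x _
            rw [map_mul, map_mul]
          rw [this, ← map_smul, ← map_smul, ← htOf0]
        · rw [sum_filter_succ_lt]
          have he2 := congrArg (ι₁.comp (ι₀ : S.A →ₐ[ℂ] A₁)) (rel_heis D.rel i')
          simp only [map_add, map_mul, map_smul, AlgHom.comp_apply] at he2
          show ι₁ (ι₀ (D.gz i')) * ι₁ (ι₀ (D.gzs i'))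
                - ι₁ (ι₀ (D.gzs i')) * ι₁ (ι₀ (D.gz i'))
              = (q ^ 2 - 1) • ∑ k ∈ Finset.univ.filter (fun k : Fin n => i' < k),
                  ι₁ (ι₀ (D.gz k)) * ι₁ (ι₀ (D.gzs k))
          rw [he2, add_sub_cancel_left]
          congr 1
          rw [tOf, map_sum, map_sum]
          rw [show (Finset.univ.filter fun k : Fin n => (i' : ℕ) + 1 ≤ (k : ℕ))
              = Finset.univ.filter fun k : Fin n => i' < k from
            Finset.filter_congr fun k _ => by rw [Fin.lt_def]; omega]
          apply Finset.sum_congr rfl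
          intro x _
          rw [map_mul, map_mul]
  have hgen' : Algebra.adjoin ℂ (Set.range gz' ∪ Set.range gzs') = ⊤ := by
    rw [eq_top_iff]
    have h1 : ∀ x : S.A, ι₁ (ι₀ x) ∈ Algebra.adjoin ℂ (Set.range gz' ∪ Set.range gzs') := by
      intro x
      have hx : x ∈ Algebra.adjoin ℂ (Set.range D.gz ∪ Set.range D.gzs) := by
        rw [D.gen]; trivial
      induction hx using Algebra.adjoin_induction with
      | mem y hy =>
          rcases hy with ⟨j, rfl⟩ | ⟨j, rfl⟩
          · exact Algebra.subset_adjoin (Set.mem_union_left _ ⟨j.succ, rfl⟩)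
          · exact Algebra.subset_adjoin (Set.mem_union_right _ ⟨j.succ, rfl⟩)
      | algebraMap c =>
          rw [AlgHom.commutes, AlgHom.commutes]
          exact Subalgebra.algebraMap_mem _ c
      | add y z hy hz hy' hz' =>
          rw [map_add, map_add]
          exact add_mem hy' hz'
      | mul y z hy hz hy' hz' =>
          rw [map_mul, map_mul]
          exact mul_mem hy' hz'
    have h2 : ∀ f : A₁, ι₁ f ∈ Algebra.adjoin ℂ (Set.range gz' ∪ Set.range gzs') := by
      intro f
      have := SkewPoly.mem_of_mem_gen
        ((Algebra.adjoin ℂ (Set.range gz' ∪ Set.range gzs')).comap ι₁)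
        (fun r => h1 r)
        (Algebra.subset_adjoin (Set.mem_union_right _ ⟨0, rfl⟩)) f
      exact this
    intro g _
    exact SkewPoly.mem_of_mem_gen _ (fun f => h2 f)
      (Algebra.subset_adjoin (Set.mem_union_left _ ⟨0, rfl⟩)) g
  -- the backwards map
  let φ0 : S.A →ₐ[ℂ] Fq (n + 1) q := (incFq n q).comp D.back
  have hφ0z : ∀ j, φ0 (D.gz j) = zGen (n + 1) q j.succ := by
    intro j
    show incFq n q (D.back (D.gz j)) = _
    rw [D.hbz, incFq_z]
  have hφ0zs : ∀ j, φ0 (D.gzs j) = zsGen (n + 1) q j.succ := by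
    intro j
    show incFq n q (D.back (D.gzs j)) = _
    rw [D.hbzs, incFq_zs]
  have hFrel := fq_relHold (n + 1) q
  have cond1 : ∀ r : S.A, zsGen (n + 1) q 0 * φ0 r
      = φ0 (α₀ r) * zsGen (n + 1) q 0 + φ0 ((SkewPoly.zeroDer α₀).lin r) := by
    intro r
    rw [show (SkewPoly.zeroDer α₀).lin r = 0 from rfl, map_zero, add_zero]
    have hx : r ∈ Algebra.adjoin ℂ (Set.range D.gz ∪ Set.range D.gzs) := by
      rw [D.gen]; trivial
    induction hx using Algebra.adjoin_induction with
    | mem y hy =>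
        rcases hy with ⟨j, rfl⟩ | ⟨j, rfl⟩
        · rw [hφ0z, D.hαz, map_smul, hφ0z, smul_mul_assoc]
          exact rel_zs' hFrel hq (Fin.succ_ne_zero j)
        · rw [hφ0zs, D.hαzs, map_smul, hφ0zs, smul_mul_assoc]
          exact rel_ss hFrel (Fin.succ_pos j)
    | algebraMap c =>
        rw [AlgHom.commutes, AlgEquiv.commutes, AlgHom.commutes, Algebra.commutes]
    | add y z hy hz hy' hz' => rw [map_add, mul_add, hy', hz', map_add, map_add, add_mul]
    | mul y z hy hz hy' hz' =>
        rw [map_mul, ← mul_assoc, hy', mul_assoc, hz', map_mul, map_mul, mul_assoc]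
  let back₁ : A₁ →ₐ[ℂ] Fq (n + 1) q := SkewPoly.lift φ0 (zsGen (n + 1) q 0) cond1
  have hback₁ι : ∀ x : S.A, back₁ (ι₀ x) = φ0 x := fun x =>
    SkewPoly.lift_ι φ0 (zsGen (n + 1) q 0) cond1 x
  have hback₁X : back₁ (SkewPoly.X : A₁) = zsGen (n + 1) q 0 :=
    SkewPoly.lift_X φ0 (zsGen (n + 1) q 0) cond1
  have hφ0w : φ0 w = (q ^ 2 - 1) • ∑ k : Fin n, zGen (n + 1) q k.succ * zsGen (n + 1) q k.succ := by
    show φ0 ((q ^ 2 - 1) • tOf D.gz D.gzs 0) = _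
    rw [map_smul, htOf0, map_sum]
    congr 1
    apply Finset.sum_congr rfl
    intro x _
    rw [map_mul, hφ0z, hφ0zs]
  have cond2 : ∀ f : A₁, zGen (n + 1) q 0 * back₁ f
      = back₁ (σ₂ f) * zGen (n + 1) q 0 + back₁ (d.lin f) := by
    have hι : ∀ x : S.A, zGen (n + 1) q 0 * back₁ (ι₀ x)
        = back₁ (σ₂ (ι₀ x)) * zGen (n + 1) q 0 + back₁ (d.lin (ι₀ x)) := by
      intro x
      rw [hd0, map_zero, add_zero, hσ₂ι, hback₁ι, hback₁ι]
      have hx : x ∈ Algebra.adjoin ℂ (Set.range D.gz ∪ Set.range D.gzs) := by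
        rw [D.gen]; trivial
      induction hx using Algebra.adjoin_induction with
      | mem y hy =>
          rcases hy with ⟨j, rfl⟩ | ⟨j, rfl⟩
          · rw [hφ0z, hβz, map_smul, hφ0z, smul_mul_assoc]
            exact rel_zz hFrel (Fin.succ_pos j)
          · rw [hφ0zs, hβzs, map_smul, hφ0zs, smul_mul_assoc]
            exact rel_zs hFrel (Fin.succ_ne_zero j).symm
      | algebraMap c =>
          rw [show α₀.symm (algebraMap ℂ S.A c) = algebraMap ℂ S.A c from α₀.symm.commutes c,
            AlgHom.commutes, Algebra.commutes]
      | add y z hy hz hy' hz' => rw [map_add, mul_add, hy', hz', map_add, map_add, add_mul]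
      | mul y z hy hz hy' hz' =>
          rw [map_mul, ← mul_assoc, hy', mul_assoc, hz', map_mul, map_mul, mul_assoc]
    have hXcond : zGen (n + 1) q 0 * back₁ (SkewPoly.X : A₁)
        = back₁ (σ₂ (SkewPoly.X : A₁)) * zGen (n + 1) q 0
            + back₁ (d.lin (SkewPoly.X : A₁)) := by
      rw [hback₁X, hσ₂X, hback₁X, hdX, hback₁ι, hφ0w]
      have he := hFrel _ _ (FqRel.heis 0)
      simp only [map_sub, map_mul, map_smul, map_sum, FreeAlgebra.lift_ι_apply, Sum.elim_inl,
        Sum.elim_inr] at he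
      rw [sub_eq_iff_eq_add] at he
      rw [he, sum_zero_lt]
      ring_nf
      abel
    intro f
    let K : Subalgebra ℂ A₁ :=
      { carrier := {f : A₁ | zGen (n + 1) q 0 * back₁ f
          = back₁ (σ₂ f) * zGen (n + 1) q 0 + back₁ (d.lin f)}
        mul_mem' := by
          intro a b ha hb
          simp only [Set.mem_setOf_eq] at ha hb ⊢
          rw [map_mul, ← mul_assoc, ha, add_mul, mul_assoc, hb, map_mul, d.leibniz, map_add,
            map_mul, map_mul, map_mul]
          rw [mul_add, ← mul_assoc, add_assoc]
        one_mem' := by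
          simp only [Set.mem_setOf_eq]
          rw [map_one, mul_one, map_one, map_one, one_mul, SkewPoly.der_one, map_zero, add_zero]
        add_mem' := by
          intro a b ha hb
          simp only [Set.mem_setOf_eq] at ha hb ⊢
          rw [map_add, mul_add, ha, hb, map_add, map_add, map_add, map_add, add_mul]
          abel
        zero_mem' := by
          simp only [Set.mem_setOf_eq]
          rw [map_zero, mul_zero, map_zero, map_zero, zero_mul, map_zero, map_zero, add_zero]
        algebraMap_mem' := by
          intro c
          simp only [Set.mem_setOf_eq]
          rw [AlgHom.commutes, AlgEquiv.commutes, AlgHom.commutes, Algebra.commutes,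
            show d.lin (algebraMap ℂ A₁ c) = 0 from ?hdc, map_zero, add_zero]
          case hdc =>
            rw [Algebra.algebraMap_eq_smul_one, map_smul, SkewPoly.der_one, smul_zero] }
    exact SkewPoly.mem_of_mem_gen K (fun r => hι r) hXcond f
  let back' : A' →ₐ[ℂ] Fq (n + 1) q := SkewPoly.lift back₁ (zGen (n + 1) q 0) cond2

  -- noetherian instances
  haveI hdom1 : IsDomain A₁ := inferInstance
  haveI hnoe1 : IsNoetherianRing A₁ := SkewPoly.isNoetherianRing
  haveI hnoeop1 : IsNoetherianRing A₁ᵐᵒᵖ := SkewPoly.isNoetherianRing_op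
  { A := A'
    ring := inferInstance
    alg := inferInstance
    data :=
      { gz := gz'
        gzs := gzs'
        dom := inferInstance
        noeth := SkewPoly.isNoetherianRing
        noethop := SkewPoly.isNoetherianRing_op
        α := α'
        hαz := by
          intro j
          refine Fin.cases ?_ ?_ j
          · exact hα'X
          · intro j'
            show α' (ι₁ (ι₀ (D.gz j'))) = q • ι₁ (ι₀ (D.gz j'))
            rw [hα'ι, hα₁ι, D.hαz, map_smul, map_smul]
        hαzs := by
          intro j
          refine Fin.cases ?_ ?_ j
          · show α' (ι₁ SkewPoly.X) = q • ι₁ SkewPoly.X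
            rw [hα'ι, hα₁X, map_smul]
          · intro j'
            show α' (ι₁ (ι₀ (D.gzs j'))) = q • ι₁ (ι₀ (D.gzs j'))
            rw [hα'ι, hα₁ι, D.hαzs, map_smul, map_smul]
        rel := hrel'
        gen := hgen'
        back := back'
        hbz := by
          intro j
          refine Fin.cases ?_ ?_ j
          · exact SkewPoly.lift_X back₁ (zGen (n + 1) q 0) cond2
          · intro j'
            show back' (ι₁ (ι₀ (D.gz j'))) = _
            rw [show back' (ι₁ (ι₀ (D.gz j')))
                = back₁ (ι₀ (D.gz j')) from SkewPoly.lift_ι back₁ _ cond2 _, hback₁ι, hφ0z]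
        hbzs := by
          intro j
          refine Fin.cases ?_ ?_ j
          · show back' (ι₁ SkewPoly.X) = _
            rw [show back' (ι₁ (SkewPoly.X : A₁))
                = back₁ (SkewPoly.X : A₁) from SkewPoly.lift_ι back₁ _ cond2 _, hback₁X]
          · intro j'
            show back' (ι₁ (ι₀ (D.gzs j'))) = _
            rw [show back' (ι₁ (ι₀ (D.gzs j')))
                = back₁ (ι₀ (D.gzs j')) from SkewPoly.lift_ι back₁ _ cond2 _, hback₁ι, hφ0zs] } }

end P9

section P10

noncomputable def stageAll (q : ℂ) (hq : q ≠ 0) : ∀ n, Stage q n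
  | 0 => stageZero q
  | n + 1 => stageStep q hq (stageAll q hq n)

/-- `F_q(N)` is an integral domain and is left and right Noetherian. -/
theorem fq_isDomain_and_noetherian (N : ℕ) (hN : 1 ≤ N) (q : ℂ) (hq : q ≠ 0) :
    IsDomain (Fq N q) ∧ IsNoetherianRing (Fq N q) ∧ IsNoetherianRing (Fq N q)ᵐᵒᵖ := by
  let S := stageAll q hq N
  letI := S.ring
  letI := S.alg
  let D := S.data
  haveI hdom : IsDomain S.A := D.dom
  haveI hnoe : IsNoetherianRing S.A := D.noeth
  haveI hnoeop : IsNoetherianRing S.Aᵐᵒᵖ := D.noethop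
  let Φ : Fq N q →ₐ[ℂ] S.A :=
    RingQuot.liftAlgHom ℂ ⟨FreeAlgebra.lift ℂ (Sum.elim D.gz D.gzs),
      fun {u v} h => D.rel u v h⟩
  have hΦz : ∀ j, Φ (zGen N q j) = D.gz j := by
    intro j
    rw [zGen, RingQuot.liftAlgHom_mkAlgHom_apply]
    simp
  have hΦzs : ∀ j, Φ (zsGen N q j) = D.gzs j := by
    intro j
    rw [zsGen, RingQuot.liftAlgHom_mkAlgHom_apply]
    simp
  have h1 : D.back.comp Φ = AlgHom.id ℂ (Fq N q) := by
    apply RingQuot.ringQuot_ext'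
    apply FreeAlgebra.hom_ext
    funext x
    cases x with
    | inl i =>
        show D.back (Φ (RingQuot.mkAlgHom ℂ (FqRel N q) (FreeAlgebra.ι ℂ (Sum.inl i)))) = _
        rw [show (RingQuot.mkAlgHom ℂ (FqRel N q) (FreeAlgebra.ι ℂ (Sum.inl i)))
            = zGen N q i from rfl, hΦz, D.hbz]
        rfl
    | inr i =>
        show D.back (Φ (RingQuot.mkAlgHom ℂ (FqRel N q) (FreeAlgebra.ι ℂ (Sum.inr i)))) = _
        rw [show (RingQuot.mkAlgHom ℂ (FqRel N q) (FreeAlgebra.ι ℂ (Sum.inr i)))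
            = zsGen N q i from rfl, hΦzs, D.hbzs]
        rfl
  have h2 : Φ.comp D.back = AlgHom.id ℂ S.A := by
    apply AlgHom.ext
    intro x
    have hx : x ∈ Algebra.adjoin ℂ (Set.range D.gz ∪ Set.range D.gzs) := by
      rw [D.gen]; trivial
    induction hx using Algebra.adjoin_induction with
    | mem y hy =>
        rcases hy with ⟨j, rfl⟩ | ⟨j, rfl⟩
        · show Φ (D.back (D.gz j)) = D.gz j
          rw [D.hbz, hΦz]
        · show Φ (D.back (D.gzs j)) = D.gzs j
          rw [D.hbzs, hΦzs]
    | algebraMap c =>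
        show Φ (D.back (algebraMap ℂ S.A c)) = algebraMap ℂ S.A c
        rw [AlgHom.commutes, AlgHom.commutes]
    | add y z hy hz hy' hz' =>
        show Φ (D.back (y + z)) = y + z
        rw [map_add, map_add]
        exact congrArg₂ (· + ·) hy' hz'
    | mul y z hy hz hy' hz' =>
        show Φ (D.back (y * z)) = y * z
        rw [map_mul, map_mul]
        exact congrArg₂ (· * ·) hy' hz'
  let e : Fq N q ≃ₐ[ℂ] S.A := AlgEquiv.ofAlgHom Φ D.back h2 h1
  refine ⟨?_, ?_, ?_⟩
  · exact Function.Injective.isDomain (e : Fq N q →+* S.A) e.injective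
  · exact isNoetherianRing_of_ringEquiv S.A e.symm.toRingEquiv
  · exact isNoetherianRing_of_ringEquiv S.Aᵐᵒᵖ (RingEquiv.op e.symm.toRingEquiv)

end P10
end
end

section
/- Let m be an odd positive integer, let q ∈ ℂ be a primitive m-th root of unity, and let N ≥ 2. On V = (ℂ^m)^{⊗(N−1)} the assignments z̄_i ↦ D_i σ_{i+1} σ_{i+2} ⋯ σ_{N−1} for i = 1,…,N−2; z̄_0 ↦ D_1 σ_1 σ_2 ⋯ σ_{N−1}; z̄_{N−1} ↦ D_{N−1}; z̄_{N−1}^* ↦ D_{N−1}; z̄_i^* ↦ D_i σ_{i+1}^{−1} ⋯ σ_{N−1}^{−1} for i = 1,…,N−2; and z̄_0^* ↦ D_1^{−1} σ_1^{−1} ⋯ σ_{N−1}^{−1} extend to a unital ℂ-algebra homomorphism F̄_q(N) → End(V), and the resulting m^{N−1}-dimensional representation of F̄_q(N) is irreducible (V has no F̄_q(N)-invariant subspaces other than 0 and V). -/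
open FreeAlgebra

/-- Generators of `F̄_q(N)`: `Sum.inl i` is `z̄_i` and `Sum.inr i` is `z̄_i^*`. -/
abbrev FqBarGen (N : ℕ) : Type := Fin N ⊕ Fin N

/-- The defining relations of the quasipolynomial algebra `F̄_q(N)`. -/
inductive FqBarRel (N : ℕ) (q : ℂ) : FreeAlgebra ℂ (FqBarGen N) → FreeAlgebra ℂ (FqBarGen N) → Prop
  | zz (i j : Fin N) (h : i < j) :
      FqBarRel N q (ι ℂ (Sum.inl i) * ι ℂ (Sum.inl j))
        (q⁻¹ • (ι ℂ (Sum.inl j) * ι ℂ (Sum.inl i)))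
  | ss (i j : Fin N) (h : i < j) :
      FqBarRel N q (ι ℂ (Sum.inr i) * ι ℂ (Sum.inr j))
        (q • (ι ℂ (Sum.inr j) * ι ℂ (Sum.inr i)))
  | zs (i j : Fin N) (h : i ≠ j) :
      FqBarRel N q (ι ℂ (Sum.inl i) * ι ℂ (Sum.inr j))
        (q⁻¹ • (ι ℂ (Sum.inr j) * ι ℂ (Sum.inl i)))
  | comm (i : Fin N) :
      FqBarRel N q (ι ℂ (Sum.inl i) * ι ℂ (Sum.inr i)) (ι ℂ (Sum.inr i) * ι ℂ (Sum.inl i))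

/-- The quasipolynomial algebra `F̄_q(N)`. -/
abbrev FqBar (N : ℕ) (q : ℂ) : Type := RingQuot (FqBarRel N q)

/-- The generator `z̄_i` of `F̄_q(N)`. -/
noncomputable def zBar (N : ℕ) (q : ℂ) (i : Fin N) : FqBar N q :=
  RingQuot.mkAlgHom ℂ (FqBarRel N q) (ι ℂ (Sum.inl i))

/-- The generator `z̄_i^*` of `F̄_q(N)`. -/
noncomputable def zsBar (N : ℕ) (q : ℂ) (i : Fin N) : FqBar N q :=
  RingQuot.mkAlgHom ℂ (FqBarRel N q) (ι ℂ (Sum.inr i))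

/-- The tensor product `(ℂ^m)^{⊗(N−1)}`, realized as functions on `(N−1)`-tuples of basis
indices; the basis vector `v_{j_1} ⊗ ⋯ ⊗ v_{j_{N−1}}` is the indicator function of
`(j_1,…,j_{N−1})`, the factors being indexed by `t : Fin (N−1)` (paper index `t + 1`). -/
abbrev TensorSp (m N : ℕ) : Type := (Fin (N - 1) → ZMod m) → ℂ

/-- The operator `σ` in the `t`-th tensor factor: on basis vectors,
`σ_t (v_{j}) = v_{j + δ_t}` (indices mod `m`). -/
def sigmaOp (m N : ℕ) (t : Fin (N - 1)) : Module.End ℂ (TensorSp m N) where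
  toFun f := fun x => f (Function.update x t (x t - 1))
  map_add' _ _ := rfl
  map_smul' _ _ := rfl

/-- The inverse `σ_t⁻¹`: on basis vectors, `σ_t⁻¹ (v_{j}) = v_{j − δ_t}`. -/
def sigmaInvOp (m N : ℕ) (t : Fin (N - 1)) : Module.End ℂ (TensorSp m N) where
  toFun f := fun x => f (Function.update x t (x t + 1))
  map_add' _ _ := rfl
  map_smul' _ _ := rfl

/-- The operator `D` in the `t`-th tensor factor: `D_t (v_j) = q^{j_t} v_j`. -/
noncomputable def dOp (m N : ℕ) (q : ℂ) (t : Fin (N - 1)) : Module.End ℂ (TensorSp m N) where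
  toFun f := fun x => q ^ (x t).val * f x
  map_add' f g := by funext x; simp [mul_add]
  map_smul' c f := by funext x; simp [smul_eq_mul]; ring

/-- The inverse `D_t⁻¹`: `D_t⁻¹ (v_j) = q^{−j_t} v_j`. -/
noncomputable def dInvOp (m N : ℕ) (q : ℂ) (t : Fin (N - 1)) : Module.End ℂ (TensorSp m N) where
  toFun f := fun x => (q ^ (x t).val)⁻¹ * f x
  map_add' f g := by funext x; simp [mul_add]
  map_smul' c f := by funext x; simp [smul_eq_mul]; ring

/-- The product `σ_a σ_{a+1} ⋯ σ_{N−1}` (in paper indexing), i.e. the product of the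
`σ_t` over all tensor factors `t` with `a ≤ t` (Lean indexing, factor `t` = paper
factor `t+1`). -/
noncomputable def sigmaProdFrom (m N : ℕ) (a : ℕ) : Module.End ℂ (TensorSp m N) :=
  ((List.finRange (N - 1)).map (fun t : Fin (N - 1) => if a ≤ (t : ℕ) then sigmaOp m N t else 1)).prod

/-- The product `σ_a⁻¹ σ_{a+1}⁻¹ ⋯ σ_{N−1}⁻¹` (in the same indexing as `sigmaProdFrom`). -/
noncomputable def sigmaInvProdFrom (m N : ℕ) (a : ℕ) : Module.End ℂ (TensorSp m N) :=
  ((List.finRange (N - 1)).map (fun t : Fin (N - 1) => if a ≤ (t : ℕ) then sigmaInvOp m N t else 1)).prod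

----------------------------------------------------------------
-- opW infrastructure

noncomputable def opW (m N : ℕ) (w : (Fin (N - 1) → ZMod m) → ℂ) (s : Fin (N - 1) → ZMod m) :
    Module.End ℂ (TensorSp m N) where
  toFun f := fun x => w x * f (x - s)
  map_add' f g := by funext x; simp [mul_add]
  map_smul' c f := by funext x; simp [smul_eq_mul]; ring

lemma opW_apply (m N : ℕ) (w : (Fin (N - 1) → ZMod m) → ℂ) (s : Fin (N - 1) → ZMod m)
    (f : TensorSp m N) (x : Fin (N - 1) → ZMod m) :
    opW m N w s f x = w x * f (x - s) := rfl

lemma opW_congr (m N : ℕ) {w w' : (Fin (N - 1) → ZMod m) → ℂ} {s s' : Fin (N - 1) → ZMod m}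
    (h1 : ∀ x, w x = w' x) (h2 : s = s') : opW m N w s = opW m N w' s' := by
  subst h2; have : w = w' := funext h1; subst this; rfl

lemma opW_mul (m N : ℕ) (w w' : (Fin (N - 1) → ZMod m) → ℂ) (s s' : Fin (N - 1) → ZMod m) :
    opW m N w s * opW m N w' s' = opW m N (fun x => w x * w' (x - s)) (s + s') := by
  apply LinearMap.ext; intro f; funext x
  simp only [Module.End.mul_apply, opW_apply, sub_sub, mul_assoc]

lemma opW_one (m N : ℕ) : opW m N (fun _ => 1) 0 = 1 := by
  apply LinearMap.ext; intro f; funext x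
  simp [opW_apply]

lemma opW_smul (m N : ℕ) (c : ℂ) (w : (Fin (N - 1) → ZMod m) → ℂ) (s : Fin (N - 1) → ZMod m) :
    c • opW m N w s = opW m N (fun x => c * w x) s := by
  apply LinearMap.ext; intro f; funext x
  simp [opW_apply, smul_eq_mul, mul_assoc]

lemma dOp_eq (m N : ℕ) (q : ℂ) (t : Fin (N - 1)) :
    dOp m N q t = opW m N (fun x => q ^ (x t).val) 0 := by
  apply LinearMap.ext; intro f; funext x; simp [dOp, opW_apply]

lemma dInvOp_eq (m N : ℕ) (q : ℂ) (t : Fin (N - 1)) :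
    dInvOp m N q t = opW m N (fun x => (q ^ (x t).val)⁻¹) 0 := by
  apply LinearMap.ext; intro f; funext x; simp [dInvOp, opW_apply]

lemma sigmaOp_eq (m N : ℕ) (t : Fin (N - 1)) :
    sigmaOp m N t = opW m N (fun _ => 1) (Pi.single t 1) := by
  apply LinearMap.ext; intro f; funext x
  simp only [sigmaOp, LinearMap.coe_mk, AddHom.coe_mk, opW_apply, one_mul]
  congr 1
  funext t'
  by_cases h : t' = t
  · subst h; simp
  · simp [Function.update_apply, h, Pi.single_apply]

lemma sigmaInvOp_eq (m N : ℕ) (t : Fin (N - 1)) :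
    sigmaInvOp m N t = opW m N (fun _ => 1) (-Pi.single t 1) := by
  apply LinearMap.ext; intro f; funext x
  simp only [sigmaInvOp, LinearMap.coe_mk, AddHom.coe_mk, opW_apply, one_mul]
  congr 1
  funext t'
  by_cases h : t' = t
  · subst h; simp [sub_neg_eq_add]
  · simp [Function.update_apply, h, Pi.single_apply]

lemma prod_shift (m N : ℕ) (L : List (Fin (N - 1) → ZMod m)) :
    (L.map (fun s => opW m N (fun _ => 1) s)).prod = opW m N (fun _ => 1) L.sum := by
  induction L with
  | nil => simp [opW_one]
  | cons a L ih =>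
      simp only [List.map_cons, List.prod_cons, ih, opW_mul, List.sum_cons, one_mul]

def SSf (m N : ℕ) (a : ℕ) : Fin (N - 1) → ZMod m := fun t => if a ≤ (t : ℕ) then 1 else 0

lemma sum_single (m N : ℕ) (a : ℕ) (v : ZMod m) :
    ((List.finRange (N - 1)).map
      (fun t : Fin (N - 1) => if a ≤ (t : ℕ) then Pi.single t v else 0)).sum
    = fun t : Fin (N - 1) => if a ≤ (t : ℕ) then v else 0 := by
  rw [← Fin.sum_univ_def]
  funext t'
  rw [Finset.sum_apply]
  have h : ∀ t : Fin (N - 1),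
      (if a ≤ (t : ℕ) then Pi.single t v else (0 : Fin (N-1) → ZMod m)) t'
        = if t' = t then (if a ≤ (t : ℕ) then v else 0) else 0 := by
    intro t
    by_cases h1 : t' = t <;> by_cases h2 : a ≤ (t : ℕ) <;>
      simp [h1, h2, Pi.single_apply]
  simp_rw [h]
  rw [Finset.sum_ite_eq]
  simp

lemma sigmaProdFrom_eq (m N : ℕ) (a : ℕ) :
    sigmaProdFrom m N a = opW m N (fun _ => 1) (SSf m N a) := by
  have hfun : (fun t : Fin (N - 1) => if a ≤ (t : ℕ) then sigmaOp m N t else 1)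
      = (fun s => opW m N (fun _ => 1) s) ∘
          (fun t : Fin (N - 1) => if a ≤ (t : ℕ) then Pi.single t (1 : ZMod m) else 0) := by
    funext t
    by_cases h : a ≤ (t : ℕ) <;> simp [h, sigmaOp_eq, opW_one]
  rw [sigmaProdFrom, hfun, ← List.map_map, prod_shift, sum_single]
  rfl

lemma sigmaInvProdFrom_eq (m N : ℕ) (a : ℕ) :
    sigmaInvProdFrom m N a = opW m N (fun _ => 1) (-SSf m N a) := by
  have hfun : (fun t : Fin (N - 1) => if a ≤ (t : ℕ) then sigmaInvOp m N t else 1)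
      = (fun s => opW m N (fun _ => 1) s) ∘
          (fun t : Fin (N - 1) => if a ≤ (t : ℕ) then Pi.single t (-1 : ZMod m) else 0) := by
    funext t
    by_cases h : a ≤ (t : ℕ) <;>
      simp [h, sigmaInvOp_eq, opW_one, ← Pi.single_neg]
  rw [sigmaInvProdFrom, hfun, ← List.map_map, prod_shift, sum_single]
  congr 1
  funext t
  by_cases h : a ≤ (t : ℕ) <;> simp [h, SSf]

----------------------------------------------------------------
-- scalar lemmas

lemma qpow_mod {m : ℕ} {q : ℂ} (hq1 : q ^ m = 1) (k : ℕ) : q ^ (k % m) = q ^ k := by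
  conv_rhs => rw [← Nat.mod_add_div k m]
  rw [pow_add, pow_mul, hq1, one_pow, mul_one]

lemma q_ne_zero {m : ℕ} {q : ℂ} (hm : 0 < m) (hq1 : q ^ m = 1) : q ≠ 0 := by
  intro h
  rw [h, zero_pow hm.ne'] at hq1
  exact zero_ne_one hq1

lemma qpow_val_add {m : ℕ} [NeZero m] {q : ℂ} (hq1 : q ^ m = 1) (a b : ZMod m) :
    q ^ (a + b).val = q ^ a.val * q ^ b.val := by
  rw [ZMod.val_add, qpow_mod hq1, pow_add]

lemma qpow_succ {m : ℕ} [NeZero m] {q : ℂ} (hq1 : q ^ m = 1) (a : ZMod m) :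
    q ^ (a + 1).val = q * q ^ a.val := by
  rw [qpow_val_add hq1, ZMod.val_one_eq_one_mod, qpow_mod hq1, pow_one, mul_comm]

lemma qpow_pred {m : ℕ} [NeZero m] {q : ℂ} (hq1 : q ^ m = 1) (a : ZMod m) :
    q ^ (a - 1).val = q⁻¹ * q ^ a.val := by
  have h := qpow_succ hq1 (a - 1)
  rw [sub_add_cancel] at h
  rw [h, inv_mul_cancel_left₀ (q_ne_zero (Nat.pos_of_ne_zero (NeZero.ne m)) hq1)]

----------------------------------------------------------------
-- generator images

noncomputable def gGen (n m : ℕ) (q : ℂ) : (Fin (n+2) ⊕ Fin (n+2)) → Module.End ℂ (TensorSp m (n + 2))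
  | Sum.inl i => opW m (n+2)
      (fun x => q ^ (x ⟨(i : ℕ) - 1, by have := i.isLt; omega⟩).val) (SSf m (n+2) i)
  | Sum.inr i =>
      if (i : ℕ) = 0 then
        opW m (n+2) (fun x => (q ^ (x ⟨0, by omega⟩).val)⁻¹) (-SSf m (n+2) 0)
      else
        opW m (n+2)
          (fun x => q ^ (x ⟨(i : ℕ) - 1, by have := i.isLt; omega⟩).val) (-SSf m (n+2) (i : ℕ))

lemma SSf_apply (m N : ℕ) (a : ℕ) (t : Fin (N - 1)) :
    SSf m N a t = if a ≤ (t : ℕ) then 1 else 0 := rfl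

lemma rel_zz_s2 (n m : ℕ) (q : ℂ) (hm : 0 < m) (hq1 : q ^ m = 1) (i j : Fin (n+2)) (hij : i < j) :
    gGen n m q (Sum.inl i) * gGen n m q (Sum.inl j)
      = q⁻¹ • (gGen n m q (Sum.inl j) * gGen n m q (Sum.inl i)) := by
  haveI : NeZero m := ⟨hm.ne'⟩
  have hij' : (i : ℕ) < (j : ℕ) := hij
  simp only [gGen]
  rw [opW_mul, opW_mul, opW_smul]
  apply opW_congr
  · intro x
    simp only [Pi.sub_apply, SSf_apply]
    rw [if_pos (show (i:ℕ) ≤ ((⟨(j:ℕ)-1, by have := j.isLt; omega⟩ : Fin (n+1)) : ℕ) from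
          le_trans (by omega) (le_refl ((j:ℕ)-1))),
        if_neg (show ¬ (j:ℕ) ≤ ((⟨(i:ℕ)-1, by have := i.isLt; omega⟩ : Fin (n+1)) : ℕ) from
          fun h => absurd (le_trans h (le_refl ((i:ℕ)-1))) (by omega)), sub_zero]
    rw [qpow_pred hq1]
    ring
  · exact add_comm _ _

lemma rel_ss_s2 (n m : ℕ) (q : ℂ) (hm : 0 < m) (hq1 : q ^ m = 1) (i j : Fin (n+2)) (hij : i < j) :
    gGen n m q (Sum.inr i) * gGen n m q (Sum.inr j)
      = q • (gGen n m q (Sum.inr j) * gGen n m q (Sum.inr i)) := by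
  haveI : NeZero m := ⟨hm.ne'⟩
  have hij' : (i : ℕ) < (j : ℕ) := hij
  have hj0 : ¬ (j : ℕ) = 0 := by omega
  by_cases hi0 : (i : ℕ) = 0
  · simp only [gGen]
    rw [if_pos hi0, if_neg hj0, opW_mul, opW_mul, opW_smul]
    apply opW_congr
    · intro x
      simp only [Pi.sub_apply, Pi.add_apply, Pi.neg_apply, SSf_apply, Fin.val_mk, sub_neg_eq_add]
      rw [if_pos (by omega : 0 ≤ (j:ℕ) - 1), if_neg (by omega : ¬ (j:ℕ) ≤ 0), add_zero,
        qpow_succ hq1]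
      ring
    · exact add_comm _ _
  · simp only [gGen]
    rw [if_neg hi0, if_neg hj0, opW_mul, opW_mul, opW_smul]
    apply opW_congr
    · intro x
      simp only [Pi.sub_apply, Pi.add_apply, Pi.neg_apply, SSf_apply, Fin.val_mk, sub_neg_eq_add]
      rw [if_pos (by omega : (i:ℕ) ≤ (j:ℕ) - 1), if_neg (by omega : ¬ (j:ℕ) ≤ (i:ℕ) - 1),
        add_zero, qpow_succ hq1]
      ring
    · exact add_comm _ _

lemma rel_zs_s2 (n m : ℕ) (q : ℂ) (hm : 0 < m) (hq1 : q ^ m = 1) (i j : Fin (n+2)) (hij : i ≠ j) :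
    gGen n m q (Sum.inl i) * gGen n m q (Sum.inr j)
      = q⁻¹ • (gGen n m q (Sum.inr j) * gGen n m q (Sum.inl i)) := by
  haveI : NeZero m := ⟨hm.ne'⟩
  have hq0 : q ≠ 0 := q_ne_zero hm hq1
  have hij' : (i : ℕ) ≠ (j : ℕ) := fun h => hij (Fin.ext h)
  by_cases hj0 : (j : ℕ) = 0
  · have hi1 : 1 ≤ (i : ℕ) := by omega
    simp only [gGen]
    rw [if_pos hj0, opW_mul, opW_mul, opW_smul]
    apply opW_congr
    · intro x
      simp only [Pi.sub_apply, Pi.add_apply, Pi.neg_apply, SSf_apply, Fin.val_mk, sub_neg_eq_add]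
      rw [if_neg (by omega : ¬ (i:ℕ) ≤ 0), if_pos (by omega : 0 ≤ (i:ℕ) - 1), sub_zero,
        qpow_succ hq1]
      field_simp
    · exact add_comm _ _
  · simp only [gGen]
    rw [if_neg hj0, opW_mul, opW_mul, opW_smul]
    apply opW_congr
    · intro x
      simp only [Pi.sub_apply, Pi.add_apply, Pi.neg_apply, SSf_apply, Fin.val_mk, sub_neg_eq_add]
      rcases lt_or_gt_of_ne hij' with hlt | hgt
      · rw [if_pos (by omega : (i:ℕ) ≤ (j:ℕ) - 1), if_neg (by omega : ¬ (j:ℕ) ≤ (i:ℕ) - 1),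
          add_zero, qpow_pred hq1]
        ring
      · rw [if_neg (by omega : ¬ (i:ℕ) ≤ (j:ℕ) - 1), if_pos (by omega : (j:ℕ) ≤ (i:ℕ) - 1),
          sub_zero, qpow_succ hq1]
        field_simp
    · exact add_comm _ _

lemma rel_comm (n m : ℕ) (q : ℂ) (hm : 0 < m) (hq1 : q ^ m = 1) (i : Fin (n+2)) :
    gGen n m q (Sum.inl i) * gGen n m q (Sum.inr i)
      = gGen n m q (Sum.inr i) * gGen n m q (Sum.inl i) := by
  haveI : NeZero m := ⟨hm.ne'⟩
  have hq0 : q ≠ 0 := q_ne_zero hm hq1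
  by_cases hi0 : (i : ℕ) = 0
  · simp only [gGen]
    rw [if_pos hi0, opW_mul, opW_mul]
    apply opW_congr
    · intro x
      simp only [Pi.sub_apply, Pi.add_apply, Pi.neg_apply, SSf_apply, Fin.val_mk, sub_neg_eq_add]
      rw [if_pos (show (i:ℕ) ≤ 0 by omega), if_pos (Nat.zero_le ((i:ℕ) - 1)),
        qpow_pred hq1, qpow_succ hq1]
      have hidx : (⟨(i:ℕ)-1, by have := i.isLt; omega⟩ : Fin (n+2-1)) = ⟨0, by omega⟩ :=
        Fin.ext (by simp only [Fin.val_mk]; omega)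
      rw [hidx]
      field_simp
    · exact add_comm _ _
  · simp only [gGen]
    rw [if_neg hi0, opW_mul, opW_mul]
    apply opW_congr
    · intro x
      simp only [Pi.sub_apply, Pi.add_apply, Pi.neg_apply, SSf_apply, Fin.val_mk, sub_neg_eq_add]
      rw [if_neg (by omega : ¬ (i:ℕ) ≤ (i:ℕ) - 1), sub_zero, add_zero]
    · exact add_comm _ _

----------------------------------------------------------------
-- irreducibility machinery

noncomputable def indF (n m : ℕ) (j : Fin (n+2-1) → ZMod m) : TensorSp m (n+2) :=
  fun x => if x = j then 1 else 0

lemma opW_indF (n m : ℕ) (w : (Fin (n+2-1) → ZMod m) → ℂ) (s j : Fin (n+2-1) → ZMod m) :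
    opW m (n+2) w s (indF n m j) = w (j + s) • indF n m (j + s) := by
  funext x
  simp only [opW_apply, indF, Pi.smul_apply, smul_eq_mul]
  by_cases h : x = j + s
  · subst h
    rw [if_pos (by abel : j + s - s = j), if_pos rfl, mul_one]
  · rw [if_neg (fun hh => h (by rw [← hh]; abel)), if_neg h, mul_zero, mul_zero]

lemma shift_diff (n m : ℕ) (a : Fin (n+2-1)) :
    -SSf m (n+2) ((a:ℕ)+1) + SSf m (n+2) (a:ℕ) = Pi.single a 1 := by
  funext t
  simp only [Pi.add_apply, Pi.neg_apply, SSf_apply, Pi.single_apply]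
  by_cases h3 : t = a
  · subst h3
    rw [if_neg (by omega : ¬ (t:ℕ)+1 ≤ (t:ℕ)), if_pos (le_refl (t:ℕ)), if_pos rfl]
    simp
  · have h3' : (t:ℕ) ≠ (a:ℕ) := fun h => h3 (Fin.ext h)
    rw [if_neg h3]
    by_cases h1 : (a:ℕ) ≤ (t:ℕ)
    · rw [if_pos (by omega : (a:ℕ)+1 ≤ (t:ℕ)), if_pos h1]; ring
    · rw [if_neg (by omega : ¬ (a:ℕ)+1 ≤ (t:ℕ)), if_neg h1]; ring

lemma gGen_DD (n m : ℕ) (q : ℂ) (t : Fin (n+2-1)) :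
    gGen n m q (Sum.inl ⟨(t:ℕ)+1, by have := t.isLt; omega⟩) *
      gGen n m q (Sum.inr ⟨(t:ℕ)+1, by have := t.isLt; omega⟩)
      = opW m (n+2) (fun x => q ^ (x t).val * q ^ (x t).val) 0 := by
  simp only [gGen]
  rw [if_neg (show ¬ ((⟨(t:ℕ)+1, by have := t.isLt; omega⟩ : Fin (n+2)) : ℕ) = 0 by
      simp only [Fin.val_mk]; omega)]
  rw [opW_mul]
  apply opW_congr
  · intro x
    simp only [Pi.sub_apply, SSf_apply, Fin.val_mk]
    rw [if_neg (by omega : ¬ (t:ℕ)+1 ≤ (t:ℕ)+1-1), sub_zero]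
    rfl
  · exact add_neg_cancel _

lemma gGen_step (n m : ℕ) (q : ℂ) (hm : 0 < m) (hq1 : q ^ m = 1) (a : Fin (n+2-1)) :
    ∃ w : (Fin (n+2-1) → ZMod m) → ℂ, (∀ x, w x ≠ 0) ∧
      gGen n m q (Sum.inr ⟨(a:ℕ)+1, by have := a.isLt; omega⟩) *
        gGen n m q (Sum.inl ⟨(a:ℕ), by have := a.isLt; omega⟩)
        = opW m (n+2) w (Pi.single a 1) := by
  have hq0 : q ≠ 0 := q_ne_zero hm hq1
  simp only [gGen]
  rw [if_neg (show ¬ ((⟨(a:ℕ)+1, by have := a.isLt; omega⟩ : Fin (n+2)) : ℕ) = 0 by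
      simp only [Fin.val_mk]; omega)]
  rw [opW_mul, shift_diff n m a]
  refine ⟨_, ?_, rfl⟩
  exact fun x => mul_ne_zero (pow_ne_zero _ hq0) (pow_ne_zero _ hq0)

lemma proj_coord (n m : ℕ) (q : ℂ) (hm : 0 < m) (hq : IsPrimitiveRoot q m) (hodd : Odd m)
    (U : Submodule ℂ (TensorSp m (n+2)))
    (hE : ∀ t : Fin (n+2-1), ∀ u ∈ U,
      (fun x : Fin (n+2-1) → ZMod m => q ^ (x t).val * q ^ (x t).val * u x) ∈ U)
    (t : Fin (n+2-1)) (c : ZMod m) (u : TensorSp m (n+2)) (hu : u ∈ U) :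
    (fun x => if x t = c then u x else 0) ∈ U := by
  haveI : NeZero m := ⟨hm.ne'⟩
  have hq1 : q ^ m = 1 := hq.pow_eq_one
  have hq0 : q ≠ 0 := q_ne_zero hm hq1
  have hEk : ∀ k : ℕ, (fun x : Fin (n+2-1) → ZMod m => q ^ (2 * k * (x t).val) * u x) ∈ U := by
    intro k
    induction k with
    | zero =>
        have he : (fun x : Fin (n+2-1) → ZMod m => q ^ (2 * 0 * (x t).val) * u x) = u := by
          funext x; simp
        rw [he]; exact hu
    | succ k ih =>
        have h2 := hE t _ ih
        have he : (fun x : Fin (n+2-1) → ZMod m =>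
            q ^ (x t).val * q ^ (x t).val * (q ^ (2 * k * (x t).val) * u x))
            = fun x => q ^ (2 * (k+1) * (x t).val) * u x := by
          funext x
          rw [show 2 * (k+1) * (x t).val
              = (x t).val + ((x t).val + 2 * k * (x t).val) by ring, pow_add, pow_add]
          ring
        rw [he] at h2; exact h2
  have key : ((m:ℂ)⁻¹ • ∑ k ∈ Finset.range m, (q ^ (2 * c.val * k))⁻¹ •
      (fun x : Fin (n+2-1) → ZMod m => q ^ (2 * k * (x t).val) * u x)) ∈ U :=
    Submodule.smul_mem _ _ (Submodule.sum_mem _ (fun k _ => Submodule.smul_mem _ _ (hEk k)))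
  have heq : ((m:ℂ)⁻¹ • ∑ k ∈ Finset.range m, (q ^ (2 * c.val * k))⁻¹ •
      (fun x : Fin (n+2-1) → ZMod m => q ^ (2 * k * (x t).val) * u x))
      = fun x => if x t = c then u x else 0 := by
    funext x
    simp only [Pi.smul_apply, Finset.sum_apply, smul_eq_mul]
    have hterm : ∀ k, (q ^ (2 * c.val * k))⁻¹ * (q ^ (2 * k * (x t).val) * u x)
        = (q ^ (2 * (x t).val) * (q ^ (2 * c.val))⁻¹) ^ k * u x := by
      intro k
      have h1 : (q ^ (2 * (x t).val) * (q ^ (2 * c.val))⁻¹) ^ k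
          = q ^ (2 * (x t).val * k) * (q ^ (2 * c.val * k))⁻¹ := by
        rw [mul_pow, inv_pow, ← pow_mul, ← pow_mul]
      rw [h1, show 2 * (x t).val * k = 2 * k * (x t).val by ring]
      ring
    rw [Finset.sum_congr rfl (fun k _ => hterm k), ← Finset.sum_mul]
    set r := q ^ (2 * (x t).val) * (q ^ (2 * c.val))⁻¹ with hr
    have hmC : (m:ℂ) ≠ 0 := Nat.cast_ne_zero.mpr hm.ne'
    by_cases hc : x t = c
    · rw [if_pos hc]
      have hrone : r = 1 := by
        rw [hr, hc]; exact mul_inv_cancel₀ (pow_ne_zero _ hq0)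
      rw [hrone]
      simp only [one_pow, Finset.sum_const, Finset.card_range, nsmul_eq_mul, mul_one]
      rw [← mul_assoc, inv_mul_cancel₀ hmC, one_mul]
    · rw [if_neg hc]
      have hp : ∀ e : ℕ, q ^ (e * m) = 1 := fun e => by
        rw [mul_comm, pow_mul, hq1, one_pow]
      have hrm : r ^ m = 1 := by
        rw [hr, mul_pow, inv_pow, ← pow_mul, ← pow_mul, hp, hp, inv_one, mul_one]
      have hr1 : r ≠ 1 := by
        intro h1
        have hpow : q ^ (2 * (x t).val) = q ^ (2 * c.val) :=
          (mul_inv_eq_one₀ (pow_ne_zero _ hq0)).mp h1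
        have hmod : 2 * (x t).val ≡ 2 * c.val [MOD m] := by
          have h2 : q ^ (2 * (x t).val % m) = q ^ (2 * c.val % m) := by
            rw [qpow_mod hq1, qpow_mod hq1]; exact hpow
          exact hq.pow_inj (Nat.mod_lt _ hm) (Nat.mod_lt _ hm) h2
        have hmod2 : (x t).val ≡ c.val [MOD m] :=
          Nat.ModEq.cancel_left_of_coprime (Nat.coprime_two_right.mpr hodd) hmod
        have hveq : (x t).val = c.val := by
          have h2 : (x t).val % m = c.val % m := hmod2
          rwa [Nat.mod_eq_of_lt (ZMod.val_lt _), Nat.mod_eq_of_lt (ZMod.val_lt _)] at h2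
        exact hc (ZMod.val_injective m hveq)
      rw [geom_sum_eq hr1, hrm]
      simp
  rw [heq] at key
  exact key

lemma proj_all (n m : ℕ) (q : ℂ) (hm : 0 < m) (hq : IsPrimitiveRoot q m) (hodd : Odd m)
    (U : Submodule ℂ (TensorSp m (n+2)))
    (hE : ∀ t : Fin (n+2-1), ∀ u ∈ U,
      (fun x : Fin (n+2-1) → ZMod m => q ^ (x t).val * q ^ (x t).val * u x) ∈ U)
    (u : TensorSp m (n+2)) (hu : u ∈ U) (j : Fin (n+2-1) → ZMod m) :
    (fun x => if x = j then u x else 0) ∈ U := by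
  classical
  have key : ∀ T : Finset (Fin (n+2-1)),
      (fun x => if ∀ t ∈ T, x t = j t then u x else 0) ∈ U := by
    intro T
    induction T using Finset.induction_on with
    | empty =>
        have he : (fun x : Fin (n+2-1) → ZMod m =>
            if ∀ t ∈ (∅ : Finset (Fin (n+2-1))), x t = j t then u x else 0) = u := by
          funext x; simp
        rw [he]; exact hu
    | @insert a T haT ih =>
        have h2 := proj_coord n m q hm hq hodd U hE a (j a) _ ih
        have he : (fun x : Fin (n+2-1) → ZMod m =>
            if x a = j a then (if ∀ t ∈ T, x t = j t then u x else 0) else 0)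
            = fun x => if ∀ t ∈ insert a T, x t = j t then u x else 0 := by
          funext x
          by_cases h1 : x a = j a <;> by_cases hT : ∀ t ∈ T, x t = j t <;>
            simp [Finset.forall_mem_insert, h1, hT]
        rw [he] at h2; exact h2
  have h := key Finset.univ
  have he : (fun x : Fin (n+2-1) → ZMod m =>
      if ∀ t ∈ (Finset.univ : Finset (Fin (n+2-1))), x t = j t then u x else 0)
      = fun x => if x = j then u x else 0 := by
    funext x
    by_cases hx : x = j
    · subst hx; simp
    · rw [if_neg hx, if_neg (fun hh => hx (funext (fun t => hh t (Finset.mem_univ t))))]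
  rw [he] at h
  exact h

/-- For `q` a primitive `m`-th root of unity (`m` odd) and `N ≥ 2`, the assignments
`z̄_0 ↦ D_1 σ_1 ⋯ σ_{N−1}`, `z̄_i ↦ D_i σ_{i+1} ⋯ σ_{N−1}` (`1 ≤ i`, so in particular
`z̄_{N−1} ↦ D_{N−1}`), `z̄_0^* ↦ D_1⁻¹ σ_1⁻¹ ⋯ σ_{N−1}⁻¹`, and
`z̄_i^* ↦ D_i σ_{i+1}⁻¹ ⋯ σ_{N−1}⁻¹` (`1 ≤ i`) extend to an algebra homomorphism
`F̄_q(N) → End((ℂ^m)^{⊗(N−1)})`, giving an irreducible representation of dimension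
`m^{N−1}`. (Here `D_i`, `σ_i` with paper index `i ∈ {1,…,N−1}` is `dOp`/`sigmaOp` at
Lean index `i − 1 : Fin (N−1)`.) -/
theorem fqBar_irreducible_rep (N : ℕ) (hN : 2 ≤ N) (m : ℕ) (hm : Odd m) (q : ℂ)
    (hq : IsPrimitiveRoot q m) :
    ∃ φ : FqBar N q →ₐ[ℂ] Module.End ℂ (TensorSp m N),
      (φ (zBar N q ⟨0, by omega⟩) =
        dOp m N q ⟨0, by omega⟩ * sigmaProdFrom m N 0) ∧
      (∀ i : Fin N, 1 ≤ (i : ℕ) →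
        φ (zBar N q i) =
          dOp m N q ⟨(i : ℕ) - 1, by have := i.isLt; omega⟩ * sigmaProdFrom m N (i : ℕ)) ∧
      (φ (zsBar N q ⟨0, by omega⟩) =
        dInvOp m N q ⟨0, by omega⟩ * sigmaInvProdFrom m N 0) ∧
      (∀ i : Fin N, 1 ≤ (i : ℕ) →
        φ (zsBar N q i) =
          dOp m N q ⟨(i : ℕ) - 1, by have := i.isLt; omega⟩ * sigmaInvProdFrom m N (i : ℕ)) ∧
      Module.finrank ℂ (TensorSp m N) = m ^ (N - 1) ∧
      (∀ U : Submodule ℂ (TensorSp m N),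
        (∀ a : FqBar N q, ∀ u ∈ U, φ a u ∈ U) → U = ⊥ ∨ U = ⊤) := by
  obtain ⟨n, rfl⟩ : ∃ n, N = n + 2 := ⟨N - 2, by omega⟩
  have hm0 : 0 < m := hm.pos
  haveI : NeZero m := ⟨hm0.ne'⟩
  have hq1 : q ^ m = 1 := hq.pow_eq_one
  have hq0 : q ≠ 0 := q_ne_zero hm0 hq1
  have hrel : ∀ ⦃x y : FreeAlgebra ℂ (FqBarGen (n+2))⦄, FqBarRel (n+2) q x y →
      (FreeAlgebra.lift ℂ (gGen n m q)) x = (FreeAlgebra.lift ℂ (gGen n m q)) y := by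
    intro x y h
    cases h with
    | zz i j hij =>
        simp only [map_mul, map_smul, lift_ι_apply]; exact rel_zz_s2 n m q hm0 hq1 i j hij
    | ss i j hij =>
        simp only [map_mul, map_smul, lift_ι_apply]; exact rel_ss_s2 n m q hm0 hq1 i j hij
    | zs i j hij =>
        simp only [map_mul, map_smul, lift_ι_apply]; exact rel_zs_s2 n m q hm0 hq1 i j hij
    | comm i =>
        simp only [map_mul, lift_ι_apply]; exact rel_comm n m q hm0 hq1 i
  set φ : FqBar (n+2) q →ₐ[ℂ] Module.End ℂ (TensorSp m (n+2)) :=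
    RingQuot.liftAlgHom ℂ ⟨FreeAlgebra.lift ℂ (gGen n m q), hrel⟩ with hφ
  have hφl : ∀ i : Fin (n+2), φ (zBar (n+2) q i) = gGen n m q (Sum.inl i) := by
    intro i; rw [hφ, zBar, RingQuot.liftAlgHom_mkAlgHom_apply, lift_ι_apply]
  have hφr : ∀ i : Fin (n+2), φ (zsBar (n+2) q i) = gGen n m q (Sum.inr i) := by
    intro i; rw [hφ, zsBar, RingQuot.liftAlgHom_mkAlgHom_apply, lift_ι_apply]
  refine ⟨φ, ?_, ?_, ?_, ?_, ?_, ?_⟩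
  · rw [hφl]
    simp only [gGen]
    rw [dOp_eq, sigmaProdFrom_eq, opW_mul]
    apply opW_congr
    · intro x; rw [mul_one]
    · rw [zero_add]
  · intro i hi
    rw [hφl]
    simp only [gGen]
    rw [dOp_eq, sigmaProdFrom_eq, opW_mul]
    apply opW_congr
    · intro x; rw [mul_one]
    · rw [zero_add]
  · rw [hφr]
    simp only [gGen]
    rw [if_pos trivial, dInvOp_eq, sigmaInvProdFrom_eq, opW_mul]
    apply opW_congr
    · intro x; rw [mul_one]
    · rw [zero_add]
  · intro i hi
    rw [hφr]
    simp only [gGen]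
    rw [if_neg (by omega : ¬ (i : ℕ) = 0), dOp_eq, sigmaInvProdFrom_eq, opW_mul]
    apply opW_congr
    · intro x; rw [mul_one]
    · rw [zero_add]
  · show Module.finrank ℂ ((Fin (n+2-1) → ZMod m) → ℂ) = m ^ (n+2-1)
    rw [Module.finrank_pi, Fintype.card_fun, ZMod.card, Fintype.card_fin]
  · intro U hU
    by_cases hUbot : U = ⊥
    · exact Or.inl hUbot
    right
    have hE : ∀ t : Fin (n+2-1), ∀ u ∈ U,
        (fun x : Fin (n+2-1) → ZMod m => q ^ (x t).val * q ^ (x t).val * u x) ∈ U := by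
      intro t u hu
      have h := hU (zBar (n+2) q ⟨(t:ℕ)+1, by have := t.isLt; omega⟩ *
        zsBar (n+2) q ⟨(t:ℕ)+1, by have := t.isLt; omega⟩) u hu
      rw [map_mul, hφl, hφr, gGen_DD n m q t] at h
      have he : opW m (n+2) (fun x => q ^ (x t).val * q ^ (x t).val) 0 u
          = fun x : Fin (n+2-1) → ZMod m => q ^ (x t).val * q ^ (x t).val * u x := by
        funext x; rw [opW_apply, sub_zero]
      rwa [he] at h
    have hstep : ∀ (j : Fin (n+2-1) → ZMod m) (a : Fin (n+2-1)),
        indF n m j ∈ U → indF n m (j + Pi.single a 1) ∈ U := by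
      intro j a hj
      obtain ⟨w, hw, hop⟩ := gGen_step n m q hm0 hq1 a
      have h := hU (zsBar (n+2) q ⟨(a:ℕ)+1, by have := a.isLt; omega⟩ *
        zBar (n+2) q ⟨(a:ℕ), by have := a.isLt; omega⟩) _ hj
      rw [map_mul, hφl, hφr, hop, opW_indF] at h
      have h2 := U.smul_mem (w (j + Pi.single a 1))⁻¹ h
      rwa [smul_smul, inv_mul_cancel₀ (hw _), one_smul] at h2
    obtain ⟨u, hu, hune⟩ := Submodule.exists_mem_ne_zero_of_ne_bot hUbot
    obtain ⟨j0, hj0⟩ : ∃ x, u x ≠ 0 := by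
      by_contra hx; push_neg at hx; exact hune (funext hx)
    have hind0 : indF n m j0 ∈ U := by
      have hproj := proj_all n m q hm0 hq hm U hE u hu j0
      have h2 := U.smul_mem (u j0)⁻¹ hproj
      have he : (u j0)⁻¹ • (fun x : Fin (n+2-1) → ZMod m => if x = j0 then u x else 0)
          = indF n m j0 := by
        funext x
        simp only [Pi.smul_apply, smul_eq_mul, indF]
        by_cases hx : x = j0
        · subst hx; rw [if_pos rfl, if_pos rfl, inv_mul_cancel₀ hj0]
        · rw [if_neg hx, if_neg hx, mul_zero]
      rwa [he] at h2
    have hsingle : ∀ (j : Fin (n+2-1) → ZMod m), indF n m j ∈ U →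
        ∀ (a : Fin (n+2-1)) (k : ℕ), indF n m (j + Pi.single a (k : ZMod m)) ∈ U := by
      intro j hj a k
      induction k with
      | zero => simpa using hj
      | succ k ih =>
          have h2 := hstep _ a ih
          have heq : (j + Pi.single a ((k : ZMod m))) + Pi.single a 1
              = j + Pi.single a (((k+1 : ℕ) : ZMod m)) := by
            rw [add_assoc, ← Pi.single_add]
            push_cast
            ring_nf
          rwa [heq] at h2
    have hall : ∀ (v : Fin (n+2-1) → ZMod m), indF n m (j0 + v) ∈ U := by
      intro v
      have hT : ∀ T : Finset (Fin (n+2-1)),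
          indF n m (j0 + ∑ a ∈ T, Pi.single a (v a)) ∈ U := by
        intro T
        induction T using Finset.induction_on with
        | empty => simpa using hind0
        | @insert a T haT ih =>
            rw [Finset.sum_insert haT]
            have h2 := hsingle _ ih a (v a).val
            have heq : (j0 + ∑ b ∈ T, Pi.single b (v b)) + Pi.single a (((v a).val : ZMod m))
                = j0 + (Pi.single a (v a) + ∑ b ∈ T, Pi.single b (v b)) := by
              rw [ZMod.natCast_rightInverse (v a)]
              ring
            rwa [heq] at h2
      have h := hT Finset.univ
      rwa [Finset.univ_sum_single] at h
    rw [Submodule.eq_top_iff']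
    intro f
    have hfrep : f = ∑ j ∈ Finset.univ, f j • indF n m j := by
      funext x
      rw [Finset.sum_apply]
      simp only [Pi.smul_apply, indF, smul_eq_mul, mul_ite, mul_one, mul_zero]
      rw [Finset.sum_ite_eq]
      simp
    rw [hfrep]
    refine Submodule.sum_mem _ (fun j _ => Submodule.smul_mem _ _ ?_)
    have h := hall (j - j0)
    have heq : j0 + (j - j0) = j := by abel
    rwa [heq] at h
end

section
/- Let N ≥ 1 and m ≥ 1 be integers and let q ∈ ℂ satisfy q^m = 1. Then in F_q(N) the elements z_i^m and (z_i^*)^m are central for every i = 0,…,N−1, and z_{N−1}^a (z_{N−1}^*)^{m−a} is central for every a = 0,1,…,m. -/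
open FreeAlgebra

/-!
Any two generators that do not form a partner pair `z_i, z_i^*` commute up to a factor `q^{±1}`,
so `m`-th powers commute with them once `q^m = 1`. For the partner pair,
`[z_i, z_i^*] = (q² - 1) S_i` with `S_i = ∑_{k>i} z_k z_k^*` satisfying `S_i z_i = q² z_i S_i`;
telescoping gives `[z_i^n, z_i^*] = (q^{2n} - 1) z_i^{n-1} S_i`, which vanishes at `n = m`
(and symmetrically for `(z_i^*)^m`). At the last index `S_{N-1} = 0`, so `z_{N-1}` and
`z_{N-1}^*` commute, and a monomial of total degree `m` in them picks up `q^{±m} = 1` against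
every other generator.
-/

section QCommute

variable {R A : Type*} [CommSemiring R] [Semiring A] [Algebra R A] {x y w : A} {c : R}

theorem mul_pow_eq_smul_pow_mul (h : x * y = c • (y * x)) (n : ℕ) :
    x * y ^ n = c ^ n • (y ^ n * x) := by
  induction n with
  | zero => simp
  | succ n ih =>
    rw [pow_succ, ← mul_assoc, ih, smul_mul_assoc, mul_assoc, h, mul_smul_comm, smul_smul,
      ← mul_assoc, ← pow_succ, ← pow_succ]

theorem pow_mul_eq_smul_mul_pow (h : x * y = c • (y * x)) (n : ℕ) :
    x ^ n * y = c ^ n • (y * x ^ n) := by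
  induction n with
  | zero => simp
  | succ n ih =>
    rw [pow_succ', mul_assoc, ih, mul_smul_comm, ← mul_assoc, h, smul_mul_assoc, smul_smul,
      mul_assoc, ← pow_succ', ← pow_succ]

theorem commute_pow_left_of_mul_eq_smul (h : x * y = c • (y * x)) {n : ℕ} (hc : c ^ n = 1) :
    Commute (x ^ n) y := by
  rw [Commute, SemiconjBy, pow_mul_eq_smul_mul_pow h, hc, one_smul]

theorem commute_pow_mul_pow_of_mul_eq_smul (hy : x * y = c • (y * x)) (hw : x * w = c • (w * x))
    {a b : ℕ} (hc : c ^ (a + b) = 1) : Commute x (y ^ a * w ^ b) := by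
  rw [Commute, SemiconjBy, ← mul_assoc, mul_pow_eq_smul_pow_mul hy, smul_mul_assoc, mul_assoc,
    mul_pow_eq_smul_pow_mul hw, mul_smul_comm, smul_smul, ← pow_add, hc, one_smul, mul_assoc]

end QCommute

section Commutator

variable {R A : Type*} [CommRing R] [Ring A] [Algebra R A] {a b s : A} {c : R}

theorem pow_succ_mul_sub_mul_pow_succ (hd : a * b - b * a = (c - 1) • s)
    (hs : s * a = c • (a * s)) (n : ℕ) :
    a ^ (n + 1) * b - b * a ^ (n + 1) = (c ^ (n + 1) - 1) • (a ^ n * s) := by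
  induction n with
  | zero => simp [hd]
  | succ n ih =>
    have hsplit : a ^ (n + 2) * b - b * a ^ (n + 2) =
        a * (a ^ (n + 1) * b - b * a ^ (n + 1)) + (a * b - b * a) * a ^ (n + 1) := by
      simp only [pow_succ']
      noncomm_ring
    rw [hsplit, ih, hd, mul_smul_comm, smul_mul_assoc, mul_pow_eq_smul_pow_mul hs, smul_smul,
      ← mul_assoc, ← pow_succ', ← add_smul]
    congr 1
    ring

theorem commute_pow_of_mul_sub_mul_eq_smul (hd : a * b - b * a = (c - 1) • s)
    (hs : s * a = c • (a * s)) {n : ℕ} (hc : c ^ n = 1) : Commute (a ^ n) b := by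
  cases n with
  | zero => exact pow_zero a ▸ Commute.one_left b
  | succ n =>
    rw [Commute, SemiconjBy, ← sub_eq_zero, pow_succ_mul_sub_mul_pow_succ hd hs, hc, sub_self,
      zero_smul]

end Commutator

namespace Fq

variable {N : ℕ} {q : ℂ}

theorem zGen_mul_zGen_of_lt {i j : Fin N} (h : i < j) :
    zGen N q i * zGen N q j = q⁻¹ • (zGen N q j * zGen N q i) := by
  simpa [zGen] using RingQuot.mkAlgHom_rel ℂ (FqRel.zz (q := q) i j h)

theorem zsGen_mul_zsGen_of_lt {i j : Fin N} (h : i < j) :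
    zsGen N q i * zsGen N q j = q • (zsGen N q j * zsGen N q i) := by
  simpa [zsGen] using RingQuot.mkAlgHom_rel ℂ (FqRel.ss (q := q) i j h)

theorem zGen_mul_zsGen_of_ne {i j : Fin N} (h : i ≠ j) :
    zGen N q i * zsGen N q j = q⁻¹ • (zsGen N q j * zGen N q i) := by
  simpa [zGen, zsGen] using RingQuot.mkAlgHom_rel ℂ (FqRel.zs (q := q) i j h)

theorem zGen_mul_zGen_of_gt (hq : q ≠ 0) {i j : Fin N} (h : j < i) :
    zGen N q i * zGen N q j = q • (zGen N q j * zGen N q i) :=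
  (inv_smul_eq_iff₀ hq).mp (zGen_mul_zGen_of_lt h).symm

theorem zsGen_mul_zsGen_of_gt (hq : q ≠ 0) {i j : Fin N} (h : j < i) :
    zsGen N q i * zsGen N q j = q⁻¹ • (zsGen N q j * zsGen N q i) :=
  (eq_inv_smul_iff₀ hq).mpr (zsGen_mul_zsGen_of_lt h).symm

theorem zsGen_mul_zGen_of_ne (hq : q ≠ 0) {i j : Fin N} (h : i ≠ j) :
    zsGen N q i * zGen N q j = q • (zGen N q j * zsGen N q i) :=
  (inv_smul_eq_iff₀ hq).mp (zGen_mul_zsGen_of_ne h.symm).symm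

variable (N q) in
noncomputable def tailSum (i : Fin N) : Fq N q :=
  ∑ k ∈ Finset.Ioi i, zGen N q k * zsGen N q k

theorem zGen_mul_zsGen_sub_zsGen_mul_zGen (i : Fin N) :
    zGen N q i * zsGen N q i - zsGen N q i * zGen N q i = (q ^ 2 - 1) • tailSum N q i := by
  simpa [zGen, zsGen, tailSum, Finset.filter_lt_eq_Ioi] using
    RingQuot.mkAlgHom_rel ℂ (FqRel.heis (q := q) i)

theorem tailSum_mul_zGen (hq : q ≠ 0) (i : Fin N) :
    tailSum N q i * zGen N q i = q ^ 2 • (zGen N q i * tailSum N q i) := by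
  rw [tailSum, Finset.sum_mul, Finset.mul_sum, Finset.smul_sum]
  refine Finset.sum_congr rfl fun k hk => ?_
  have hik : i < k := Finset.mem_Ioi.mp hk
  rw [mul_assoc, zsGen_mul_zGen_of_ne hq hik.ne', mul_smul_comm, ← mul_assoc,
    zGen_mul_zGen_of_gt hq hik, smul_mul_assoc, smul_smul, ← sq, mul_assoc]

theorem tailSum_mul_zsGen (hq : q ≠ 0) (i : Fin N) :
    tailSum N q i * zsGen N q i = q⁻¹ ^ 2 • (zsGen N q i * tailSum N q i) := by
  rw [tailSum, Finset.sum_mul, Finset.mul_sum, Finset.smul_sum]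
  refine Finset.sum_congr rfl fun k hk => ?_
  have hik : i < k := Finset.mem_Ioi.mp hk
  rw [mul_assoc, zsGen_mul_zsGen_of_gt hq hik, mul_smul_comm, ← mul_assoc,
    zGen_mul_zsGen_of_ne hik.ne', smul_mul_assoc, smul_smul, ← sq, mul_assoc]

theorem tailSum_eq_zero {i : Fin N} (hi : ∀ k, k ≤ i) : tailSum N q i = 0 :=
  Finset.sum_eq_zero fun k hk => absurd (hi k) (not_le.mpr (Finset.mem_Ioi.mp hk))

theorem mem_center_of_commute_zGen_zsGen {x : Fq N q} (hz : ∀ j, Commute x (zGen N q j))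
    (hs : ∀ j, Commute x (zsGen N q j)) : x ∈ Subring.center (Fq N q) := by
  rw [Subring.mem_center_iff]
  intro y
  obtain ⟨f, rfl⟩ := RingQuot.mkAlgHom_surjective ℂ (FqRel N q) y
  have hf : RingQuot.mkAlgHom ℂ (FqRel N q) f ∈
      Algebra.adjoin ℂ (RingQuot.mkAlgHom ℂ (FqRel N q) '' Set.range (ι ℂ)) := by
    rw [Algebra.adjoin_image, adjoin_range_ι]
    exact Subalgebra.mem_map.mpr ⟨f, Algebra.mem_top, rfl⟩
  refine (Algebra.commute_of_mem_adjoin_of_forall_mem_commute hf ?_).symm.eq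
  rintro _ ⟨_, ⟨j | j, rfl⟩, rfl⟩
  exacts [hz j, hs j]

theorem zGen_pow_mem_center (hq : q ≠ 0) {m : ℕ} (hqm : q ^ m = 1) (i : Fin N) :
    zGen N q i ^ m ∈ Subring.center (Fq N q) := by
  have hqm' : q⁻¹ ^ m = 1 := by rw [inv_pow, hqm, inv_one]
  refine mem_center_of_commute_zGen_zsGen (fun j => ?_) (fun j => ?_)
  · rcases lt_trichotomy i j with h | rfl | h
    · exact commute_pow_left_of_mul_eq_smul (zGen_mul_zGen_of_lt h) hqm'
    · exact (Commute.refl _).pow_left m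
    · exact commute_pow_left_of_mul_eq_smul (zGen_mul_zGen_of_gt hq h) hqm
  · rcases eq_or_ne i j with rfl | h
    · exact commute_pow_of_mul_sub_mul_eq_smul (zGen_mul_zsGen_sub_zsGen_mul_zGen i)
        (tailSum_mul_zGen hq i) (by rw [← pow_mul, mul_comm, pow_mul, hqm, one_pow])
    · exact commute_pow_left_of_mul_eq_smul (zGen_mul_zsGen_of_ne h) hqm'

theorem zsGen_pow_mem_center (hq : q ≠ 0) {m : ℕ} (hqm : q ^ m = 1) (i : Fin N) :
    zsGen N q i ^ m ∈ Subring.center (Fq N q) := by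
  have hqm' : q⁻¹ ^ m = 1 := by rw [inv_pow, hqm, inv_one]
  refine mem_center_of_commute_zGen_zsGen (fun j => ?_) (fun j => ?_)
  · rcases eq_or_ne i j with rfl | h
    · have hd : zsGen N q i * zGen N q i - zGen N q i * zsGen N q i =
          (q⁻¹ ^ 2 - 1) • (q ^ 2 • tailSum N q i) := by
        rw [smul_smul, show (q⁻¹ ^ 2 - 1) * q ^ 2 = -(q ^ 2 - 1) by field_simp; ring, neg_smul,
          ← zGen_mul_zsGen_sub_zsGen_mul_zGen, neg_sub]
      have hs : q ^ 2 • tailSum N q i * zsGen N q i =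
          q⁻¹ ^ 2 • (zsGen N q i * q ^ 2 • tailSum N q i) := by
        rw [smul_mul_assoc, tailSum_mul_zsGen hq, mul_smul_comm, smul_comm]
      exact commute_pow_of_mul_sub_mul_eq_smul hd hs
        (by rw [← pow_mul, mul_comm, pow_mul, hqm', one_pow])
    · exact commute_pow_left_of_mul_eq_smul (zsGen_mul_zGen_of_ne hq h) hqm
  · rcases lt_trichotomy i j with h | rfl | h
    · exact commute_pow_left_of_mul_eq_smul (zsGen_mul_zsGen_of_lt h) hqm
    · exact (Commute.refl _).pow_left m
    · exact commute_pow_left_of_mul_eq_smul (zsGen_mul_zsGen_of_gt hq h) hqm'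

theorem zGen_pow_mul_zsGen_pow_mem_center (hq : q ≠ 0) {i : Fin N} (hi : ∀ k, k ≤ i)
    {a b : ℕ} (hab : q ^ (a + b) = 1) :
    zGen N q i ^ a * zsGen N q i ^ b ∈ Subring.center (Fq N q) := by
  have hab' : q⁻¹ ^ (a + b) = 1 := by rw [inv_pow, hab, inv_one]
  have hcomm : Commute (zGen N q i) (zsGen N q i) := by
    rw [Commute, SemiconjBy, ← sub_eq_zero, zGen_mul_zsGen_sub_zsGen_mul_zGen,
      tailSum_eq_zero hi, smul_zero]
  refine mem_center_of_commute_zGen_zsGen (fun j => ?_) (fun j => ?_)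
  · rcases eq_or_ne j i with rfl | h
    · exact (((Commute.refl _).pow_right a).mul_right (hcomm.pow_right b)).symm
    · exact (commute_pow_mul_pow_of_mul_eq_smul (zGen_mul_zGen_of_lt ((hi j).lt_of_ne h))
        (zGen_mul_zsGen_of_ne h) hab').symm
  · rcases eq_or_ne j i with rfl | h
    · exact ((hcomm.symm.pow_right a).mul_right ((Commute.refl _).pow_right b)).symm
    · exact (commute_pow_mul_pow_of_mul_eq_smul (zsGen_mul_zGen_of_ne hq h)
        (zsGen_mul_zsGen_of_lt ((hi j).lt_of_ne h)) hab).symm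

end Fq

/-- If `q^m = 1` then `z_i^m`, `(z_i^*)^m` are central, and `z_{N−1}^a (z_{N−1}^*)^{m−a}`
is central for `0 ≤ a ≤ m`. -/
theorem fq_powers_central (N : ℕ) (hN : 1 ≤ N) (m : ℕ) (q : ℂ)
    (hq : q ≠ 0) (hqm : q ^ m = 1) :
    (∀ i : Fin N, zGen N q i ^ m ∈ Subring.center (Fq N q)) ∧
    (∀ i : Fin N, zsGen N q i ^ m ∈ Subring.center (Fq N q)) ∧
    (∀ a : ℕ, a ≤ m →
      zGen N q ⟨N - 1, by omega⟩ ^ a * zsGen N q ⟨N - 1, by omega⟩ ^ (m - a) ∈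
        Subring.center (Fq N q)) := by
  refine ⟨Fq.zGen_pow_mem_center hq hqm, Fq.zsGen_pow_mem_center hq hqm, fun a ha => ?_⟩
  refine Fq.zGen_pow_mul_zsGen_pow_mem_center hq
    (fun k => Fin.le_def.mpr (Nat.le_sub_one_of_lt k.isLt)) ?_
  rwa [Nat.add_sub_cancel' ha]
end
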